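/- arXiv:math/0003203 — 6 statements merged into one kernel-verified Lean document; each statement's English description precedes it below -/
import Mathlib

section
/- Assume the decomposition 𝒩 = 𝒩_1 ⊕ … ⊕ 𝒩_d is a gradation with 𝒩_1 generating 𝒩 as a Lie algebra. Let ρ be a left-invariant inner metric on N, compatible with the topology, for which every dilation δ_t (t > 0) satisfies ρ(δ_t x, δ_t y) = t·ρ(x,y). Let z ∈ 𝒩_d, ε > 0, r = ρ(e,z), and let n be a positive integer. Then e ∈ B(z,ε)^n if and only if n > (r/ε)^{d/(d−1)}. Moreover, for any s > 0, if n^{1/d}·r + s < n·ε, then B(z,ε)^n ⊇ B(s). -/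
open Set Filter Topology Asymptotics MeasureTheory Pointwise

noncomputable section

variable {E : Type*} [NormedAddCommGroup E] [NormedSpace ℝ E]

/-- A Lie bracket on `E`, given as a bilinear map. -/
structure IsLieBracket (br : E →ₗ[ℝ] E →ₗ[ℝ] E) : Prop where
  alternating : ∀ x, br x x = 0
  jacobi : ∀ x y z, br x (br y z) + br y (br z x) + br z (br x y) = 0

/-- `lcsN br k` is the `(k+1)`-st term `𝒩^{k+1}` of the lower central series of the
Lie algebra `(E, br)`; so `lcsN br 0 = 𝒩¹ = E`, `lcsN br 1 = 𝒩² = [𝒩,𝒩]`, etc. -/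
def lcsN (br : E →ₗ[ℝ] E →ₗ[ℝ] E) : ℕ → Submodule ℝ E
  | 0 => ⊤
  | k + 1 => Submodule.span ℝ {z | ∃ x, ∃ y ∈ lcsN br k, z = br x y}

/-- The group multiplication of the simply connected group of the nilpotent Lie algebra
`(E, br)` realized on `E` by the Campbell–Hausdorff formula
`m x y = x + y + ½⁅x,y⁆ + (Lie products of length ≥ 3)`:
it is smooth, associative, has identity `e = 0` and inverse `-x`; elements whose bracket
with everything vanishes (central elements) multiply additively, and since `exp` is the
identity map, one-parameter subgroups are lines: `m (s•x) (t•x) = (s+t)•x`. -/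
structure IsCHGroup (br : E →ₗ[ℝ] E →ₗ[ℝ] E) (m : E → E → E) : Prop where
  smooth : ContDiff ℝ (⊤ : ℕ∞) fun p : E × E => m p.1 p.2
  assoc : ∀ x y z, m (m x y) z = m x (m y z)
  one_mul : ∀ x, m 0 x = x
  mul_one : ∀ x, m x 0 = x
  inv_mul : ∀ x, m (-x) x = 0
  ch : ∀ x y, m x y - (x + y + (2:ℝ)⁻¹ • br x y) ∈ lcsN br 2
  central : ∀ x, (∀ w, br x w = 0) → ∀ y, m x y = x + y ∧ m y x = y + x
  line : ∀ (s t : ℝ) (x : E), m (s • x) (t • x) = (s + t) • x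

/-- `n`-fold pointwise product of a set in the group `(E, m)`; `S⁰ = {e} = {0}`. -/
def setPow (m : E → E → E) (S : Set E) : ℕ → Set E
  | 0 => {0}
  | n + 1 => Set.image2 m S (setPow m S n)

/-- `γ : [a,b] → N` is a (piecewise smooth) curve whose one-sided tangent vectors are the
left translations `d_eλ_{γ(t)}(u t)` of vectors `u t ∈ C`, where `λ_g h = m g h`. -/
def IsTanCurveOn (m : E → E → E) (C : Set E) (γ u : ℝ → E) (a b : ℝ) : Prop :=
  ContinuousOn γ (Set.Icc a b) ∧
    ∃ S : Finset ℝ, ∀ t ∈ Set.Icc a b, t ∉ S →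
      u t ∈ C ∧ HasDerivAt γ (fderiv ℝ (m (γ t)) 0 (u t)) t

/-- The Carnot–Carathéodory distance on the group `(E, m)` associated to the
left-invariant distribution generated by `H ⊆ E` and the euclidean norm: the infimum of
left-invariant lengths `∫ ‖u‖` of horizontal curves joining `x` to `y`.
(For `H = univ` this is the left-invariant Riemannian distance of the euclidean norm.) -/
def ccDist (m : E → E → E) (H : Set E) (x y : E) : ℝ :=
  sInf {L | ∃ γ u : ℝ → E, ∃ a b : ℝ, a ≤ b ∧ γ a = x ∧ γ b = y ∧
    IsTanCurveOn m H γ u a b ∧ L = ∫ t in a..b, ‖u t‖}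

/-- Open ball of the Carnot–Carathéodory metric. -/
def ccBall (m : E → E → E) (H : Set E) (x : E) (r : ℝ) : Set E :=
  {y | ccDist m H x y < r}

/-- `ρ` is a left-invariant metric on the group `(E, m)` compatible with the topology. -/
structure IsLeftInvMetric (m : E → E → E) (ρ : E → E → ℝ) : Prop where
  eq_iff : ∀ x y, ρ x y = 0 ↔ x = y
  symm : ∀ x y, ρ x y = ρ y x
  triangle : ∀ x y z, ρ x z ≤ ρ x y + ρ y z
  leftInvariant : ∀ g x y, ρ (m g x) (m g y) = ρ x y
  compatible : ∀ x : E, (𝓝 x).HasBasis (fun ε : ℝ => 0 < ε) fun ε => {y | ρ x y < ε}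

/-- Open ball `B(x,r)` of the metric `ρ`. -/
def mball (ρ : E → E → ℝ) (x : E) (r : ℝ) : Set E := {y | ρ x y < r}

/-- The metric `ρ` on the group `(E, m)` (identity `0`) is inner: `B(r)B(s) = B(r+s)`. -/
def IsInnerMetric (m : E → E → E) (ρ : E → E → ℝ) : Prop :=
  ∀ r s : ℝ, 0 < r → 0 < s →
    Set.image2 m (mball ρ 0 r) (mball ρ 0 s) = mball ρ 0 (r + s)

/-- Lemma 1 of the paper.
`𝒩 = 𝒩_1 ⊕ … ⊕ 𝒩_d` is a gradation of the nilpotent Lie algebra `(E, br)` of class `d`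
(each `𝒩_k ⊆ 𝒩^k` complementary to `𝒩^{k+1}`, `⁅𝒩_k, 𝒩_l⁆ ⊆ 𝒩_{k+l}`), `N` is the
corresponding group realized on `E` by the Campbell–Hausdorff multiplication `m`, and
`ρ` is a left-invariant inner metric on `N`, compatible with the topology, for which every
dilation `δ_t` (`t > 0`, acting as `t^k` on `𝒩_k`) satisfies `ρ(δ_t x, δ_t y) = t ρ(x,y)`.
If `z ∈ 𝒩_d`, `ε > 0`, `r = ρ(e,z)` and `n` is a positive integer, then
`e ∈ B(z,ε)^n ↔ n > (r/ε)^{d/(d-1)}`; moreover for any `s > 0`, if `n^{1/d} r + s < n ε`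
then `B(z,ε)^n ⊇ B(s)`. -/
theorem statement1
    {E : Type*} [NormedAddCommGroup E] [InnerProductSpace ℝ E] [FiniteDimensional ℝ E]
    (br : E →ₗ[ℝ] E →ₗ[ℝ] E) (hbr : IsLieBracket br)
    (d : ℕ) (hd : 1 < d)
    (hclass : lcsN br d = ⊥ ∧ lcsN br (d - 1) ≠ ⊥)
    (Nsub : ℕ → Submodule ℝ E)
    (hcompl : ∀ k, 1 ≤ k → k ≤ d →
      Nsub k ⊔ lcsN br k = lcsN br (k - 1) ∧ Nsub k ⊓ lcsN br k = ⊥)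
    (hNzero : ∀ k, k = 0 ∨ d < k → Nsub k = ⊥)
    (hgrad : ∀ k l, ∀ x ∈ Nsub k, ∀ y ∈ Nsub l, br x y ∈ Nsub (k + l))
    (m : E → E → E) (hm : IsCHGroup br m)
    (δ : ℝ → E →ₗ[ℝ] E) (hδ : ∀ (t : ℝ) (k : ℕ), ∀ x ∈ Nsub k, δ t x = t ^ k • x)
    (ρ : E → E → ℝ) (hρ : IsLeftInvMetric m ρ) (hinner : IsInnerMetric m ρ)
    (hdil : ∀ t : ℝ, 0 < t → ∀ x y, ρ (δ t x) (δ t y) = t * ρ x y)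
    (z : E) (hz : z ∈ Nsub d) (ε : ℝ) (hε : 0 < ε)
    (r : ℝ) (hr : r = ρ 0 z)
    (n : ℕ) (hn : 0 < n) :
    ((0 : E) ∈ setPow m (mball ρ z ε) n ↔ (n : ℝ) > (r / ε) ^ ((d : ℝ) / ((d : ℝ) - 1)))
      ∧ ∀ s : ℝ, 0 < s → (n : ℝ) ^ ((1 : ℝ) / (d : ℝ)) * r + s < (n : ℝ) * ε →
          mball ρ 0 s ⊆ setPow m (mball ρ z ε) n := by
  have hdne : (d:ℝ) ≠ 0 := Nat.cast_ne_zero.mpr (by omega)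
  have hdr1 : (0:ℝ) < (d:ℝ) - 1 := by
    have : (2:ℝ) ≤ (d:ℝ) := by exact_mod_cast hd
    linarith
  have hnpos : (0:ℝ) < (n:ℝ) := by exact_mod_cast hn
  -- nonnegativity of ρ
  have ρ_nonneg : ∀ x y, 0 ≤ ρ x y := by
    intro x y
    have h1 := hρ.triangle x y x
    have h2 := (hρ.eq_iff x x).mpr rfl
    have h3 := hρ.symm x y
    linarith
  -- z is central
  have hker : ∀ w : E, br z w = 0 := by
    have hNk : ∀ k, 1 ≤ k → Nsub k ≤ LinearMap.ker (br z) := by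
      intro k hk x hx
      have h1 : br z x ∈ Nsub (d + k) := hgrad d k z hz x hx
      have hb : Nsub (d + k) = ⊥ := hNzero _ (Or.inr (by omega))
      rw [hb] at h1
      simpa [LinearMap.mem_ker] using h1
    have key : ∀ i, lcsN br (d - i) ≤ LinearMap.ker (br z) := by
      intro i
      induction i with
      | zero =>
        rw [Nat.sub_zero, hclass.1]; exact bot_le
      | succ i ih =>
        by_cases h : i + 1 ≤ d
        · have hj : d - (i+1) + 1 = d - i := by omega
          have hsup := (hcompl (d - (i+1) + 1) (by omega) (by omega)).1
          rw [Nat.add_sub_cancel] at hsup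
          rw [← hsup]
          exact sup_le (hNk _ (by omega)) (by rw [hj]; exact ih)
        · have he : d - (i+1) = d - i := by omega
          rw [he]; exact ih
    intro w
    have hw : w ∈ lcsN br (d - d) := by
      rw [Nat.sub_self]
      show w ∈ (⊤ : Submodule ℝ E)
      trivial
    exact LinearMap.mem_ker.mp (key d hw)
  have hcent : ∀ (c : ℝ) (y : E), m (c • z) y = c • z + y ∧ m y (c • z) = y + c • z := by
    intro c y
    refine hm.central (c • z) (fun w => ?_) y
    have : br (c • z) w = c • br z w := by simp
    rw [this, hker w, smul_zero]
  have hcent1 : ∀ y : E, m z y = z + y := fun y => by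
    simpa using (hcent 1 y).1
  have hcent2 : ∀ (c : ℝ) (y : E), m (c • z) y = c • z + y := fun c y => (hcent c y).1
  have hcent3 : ∀ (c : ℝ) (y : E), m y (c • z) = y + c • z := fun c y => (hcent c y).2
  -- translation formula for the metric
  have hρtrans : ∀ (c : ℝ) (y : E), ρ (c • z) y = ρ 0 (y - c • z) := by
    intro c y
    have h1 := hρ.leftInvariant (c • z) 0 (y - c • z)
    rw [(hcent c 0).1, (hcent c (y - c • z)).1] at h1
    have e1 : c • z + 0 = c • z := by abel
    have e2 : c • z + (y - c • z) = y := by abel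
    rw [e1, e2] at h1
    exact h1
  -- balls centered at multiples of z are translates
  have hball : ∀ (c T : ℝ), mball ρ (c • z) T = (fun w => c • z + w) '' mball ρ 0 T := by
    intro c T
    ext y
    simp only [mball, Set.mem_setOf_eq, Set.mem_image]
    constructor
    · intro h
      refine ⟨y - c • z, ?_, by abel⟩
      rw [← hρtrans]; exact h
    · rintro ⟨w, hw, rfl⟩
      rw [hρtrans]
      have : c • z + w - c • z = w := by abel
      rw [this]; exact hw
  -- multiplication formula
  have hmul : ∀ (c : ℝ) (a b : E), m (z + a) (c • z + b) = (c + 1) • z + m a b := by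
    intro c a b
    have l1 : m z (c • z) = (1 + c) • z := by
      have := hm.line 1 c z
      simpa using this
    calc m (z + a) (c • z + b)
        = m (m z a) (m (c • z) b) := by rw [hcent1 a, hcent2 c b]
      _ = m z (m a (m (c • z) b)) := hm.assoc _ _ _
      _ = m z (m (m a (c • z)) b) := by rw [hm.assoc]
      _ = m z (m (m (c • z) a) b) := by rw [hcent3 c a, add_comm a (c • z), ← hcent2 c a]
      _ = m z (m (c • z) (m a b)) := by rw [hm.assoc]
      _ = m (m z (c • z)) (m a b) := (hm.assoc _ _ _).symm
      _ = (c + 1) • z + m a b := by rw [l1, hcent2 (1 + c), add_comm (1:ℝ) c]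
  -- product of a ball around z with a ball around c•z
  have hstep : ∀ (c R : ℝ), 0 < R →
      Set.image2 m (mball ρ z ε) (mball ρ (c • z) R)
        = mball ρ ((c + 1) • z) (ε + R) := by
    intro c R hR
    have hz1 : mball ρ z ε = (fun w => z + w) '' mball ρ 0 ε := by
      have := hball 1 ε
      simpa using this
    rw [hz1, hball c R, Set.image2_image_left, Set.image2_image_right]
    simp only [hmul]
    rw [show Set.image2 (fun a b => (c+1) • z + m a b) (mball ρ 0 ε) (mball ρ 0 R)
          = (fun w => (c+1) • z + w) '' Set.image2 m (mball ρ 0 ε) (mball ρ 0 R) from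
        (Set.image_image2 _ _).symm,
      hinner ε R hε hR, ← hball (c+1) (ε+R)]
  -- the n-fold product of B(z,ε)
  have hpow : ∀ k : ℕ, setPow m (mball ρ z ε) (k+1)
      = mball ρ (((k:ℝ)+1) • z) (((k:ℝ)+1) * ε) := by
    intro k
    induction k with
    | zero =>
      show Set.image2 m (mball ρ z ε) {0} = _
      rw [Set.image2_singleton_right]
      simp only [hm.mul_one, Set.image_id']
      norm_num
    | succ k ih =>
      show Set.image2 m (mball ρ z ε) (setPow m (mball ρ z ε) (k+1)) = _
      rw [ih, hstep ((k:ℝ)+1) _ (by positivity)]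
      have e1 : (((k+1:ℕ)):ℝ) + 1 = ((k:ℝ)+1) + 1 := by push_cast; ring
      rw [e1]
      congr 1
      ring
  have hpown : setPow m (mball ρ z ε) n = mball ρ ((n:ℝ) • z) ((n:ℝ) * ε) := by
    obtain ⟨k, rfl⟩ : ∃ k, n = k + 1 := ⟨n - 1, by omega⟩
    rw [hpow k]
    norm_cast
  -- the distance from 0 to (n:ℝ)•z
  set t : ℝ := (n:ℝ) ^ ((1:ℝ)/(d:ℝ)) with ht
  have htpos : 0 < t := Real.rpow_pos_of_pos hnpos _
  have htd : t ^ (d:ℕ) = (n:ℝ) := by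
    rw [ht, ← Real.rpow_natCast ((n:ℝ) ^ ((1:ℝ)/(d:ℝ))) d, ← Real.rpow_mul hnpos.le,
      one_div_mul_cancel hdne, Real.rpow_one]
  have hρnz : ρ 0 ((n:ℝ) • z) = t * r := by
    have h1 := hdil t htpos 0 z
    rw [map_zero, hδ t d z hz, htd] at h1
    rw [hr]
    exact h1
  have hrnn : 0 ≤ r := hr ▸ ρ_nonneg 0 z
  have hmem : (0:E) ∈ setPow m (mball ρ z ε) n ↔ t * r < (n:ℝ) * ε := by
    rw [hpown]
    show ρ ((n:ℝ) • z) 0 < (n:ℝ) * ε ↔ _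
    rw [hρ.symm, hρnz]
  have hiff : t * r < (n:ℝ) * ε ↔ (n:ℝ) > (r / ε) ^ ((d:ℝ)/((d:ℝ)-1)) := by
    have hp : (0:ℝ) < (d:ℝ)/((d:ℝ)-1) := div_pos (by linarith) hdr1
    rcases eq_or_lt_of_le hrnn with h0 | hrpos
    · rw [← h0]
      constructor
      · intro _
        rw [zero_div, Real.zero_rpow (ne_of_gt hp)]
        exact hnpos
      · intro _
        rw [mul_zero]
        positivity
    · have e2 : (n:ℝ) ^ (((d:ℝ)-1)/(d:ℝ)) = (n:ℝ) / t := by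
        rw [show ((d:ℝ)-1)/(d:ℝ) = 1 - 1/(d:ℝ) by field_simp,
          Real.rpow_sub hnpos, Real.rpow_one, ← ht]
      have key1 : t * r < (n:ℝ) * ε ↔ r / ε < (n:ℝ) ^ (((d:ℝ)-1)/(d:ℝ)) := by
        rw [e2, div_lt_div_iff₀ hε htpos, mul_comm r t]
      have key2 : r / ε < (n:ℝ) ^ (((d:ℝ)-1)/(d:ℝ)) ↔
          (r/ε) ^ ((d:ℝ)/((d:ℝ)-1)) < (n:ℝ) := by
        rw [← Real.rpow_lt_rpow_iff (le_of_lt (div_pos hrpos hε))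
          (Real.rpow_nonneg hnpos.le _) hp, ← Real.rpow_mul hnpos.le,
          div_mul_div_comm, mul_comm ((d:ℝ)-1) (d:ℝ),
          div_self (by positivity : (d:ℝ) * ((d:ℝ)-1) ≠ 0), Real.rpow_one]
      rw [key1, key2]
  refine ⟨hmem.trans hiff, ?_⟩
  intro s hs hlt w hw
  rw [hpown]
  show ρ ((n:ℝ) • z) w < (n:ℝ) * ε
  have h1 : ρ ((n:ℝ) • z) w ≤ ρ ((n:ℝ) • z) 0 + ρ 0 w := hρ.triangle _ _ _
  have h2 : ρ ((n:ℝ) • z) 0 = t * r := by rw [hρ.symm, hρnz]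
  have hw' : ρ 0 w < s := hw
  linarith
end
end

section
/- Assume the decomposition 𝒩 = 𝒩_1 ⊕ … ⊕ 𝒩_d is a gradation with 𝒩_1 generating 𝒩, and let B(x,r) denote balls of a left-invariant metric on N compatible with the topology for which the map δ_{−1} is an isometry (for instance the Carnot–Carathéodory metric κ). Let x ∈ 𝒩_{d−1}, ε > 0, and let n be a positive integer such that B(x,ε)^n ∩ 𝒩^d ≠ ∅. Then e ∈ B(x,2ε)^{2n}. -/
open Set Filter Topology Asymptotics MeasureTheory Pointwise

noncomputable section

variable {E : Type*} [NormedAddCommGroup E] [NormedSpace ℝ E]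

/-! ### Auxiliary material for the proof of Statement 3 -/

section AuxMprod

variable {E : Type*} [NormedAddCommGroup E] [NormedSpace ℝ E]

/-- Product of a list of group elements, `mprod m [a₁,…,aₙ] = a₁⋯aₙ`. -/
def mprod (m : E → E → E) (l : List E) : E := l.foldr m 0

@[simp] lemma mprod_nil (m : E → E → E) : mprod m ([] : List E) = 0 := rfl

@[simp] lemma mprod_cons (m : E → E → E) (a : E) (l : List E) :
    mprod m (a :: l) = m a (mprod m l) := rfl

lemma mem_setPow_iff (m : E → E → E) (S : Set E) (n : ℕ) (z : E) :
    z ∈ setPow m S n ↔ ∃ l : List E, l.length = n ∧ (∀ b ∈ l, b ∈ S) ∧ mprod m l = z := by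
  induction n generalizing z with
  | zero =>
    constructor
    · intro hz
      have hz0 : z = 0 := by simpa [setPow] using hz
      exact ⟨[], rfl, by simp, hz0.symm⟩
    · rintro ⟨l, hl, -, rfl⟩
      rw [List.length_eq_zero_iff] at hl
      subst hl
      simp [setPow]
  | succ n ih =>
    constructor
    · intro hz
      simp only [setPow] at hz
      rw [Set.mem_image2] at hz
      obtain ⟨a, ha, w, hw, hmul⟩ := hz
      obtain ⟨l, hl, hb, hp⟩ := (ih w).mp hw
      refine ⟨a :: l, by simp [hl], ?_, by simp [hp, hmul]⟩
      intro b hb'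
      rcases List.mem_cons.mp hb' with h | h
      · exact h ▸ ha
      · exact hb b h
    · rintro ⟨l, hl, hb, rfl⟩
      cases l with
      | nil => simp at hl
      | cons a t =>
        simp only [setPow]
        rw [Set.mem_image2]
        refine ⟨a, hb a List.mem_cons_self, mprod m t, ?_, rfl⟩
        exact (ih _).mpr ⟨t, by simpa using hl, fun b h => hb b (List.mem_cons_of_mem a h), rfl⟩

lemma mprod_map (m : E → E → E) (f : E → E) (hf0 : f 0 = 0)
    (hfm : ∀ a b, f (m a b) = m (f a) (f b)) (l : List E) :
    f (mprod m l) = mprod m (l.map f) := by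
  induction l with
  | nil => simpa
  | cons a t ih => simp [hfm, ih]

variable {br : E →ₗ[ℝ] E →ₗ[ℝ] E} {m : E → E → E} (hm : IsCHGroup br m)
include hm

lemma IsCHGroup.mul_inv' (a : E) : m a (-a) = 0 := by
  have h := hm.line 1 (-1) a
  simpa using h

lemma IsCHGroup.inv_unique {a w : E} (h : m a w = 0) : w = -a := by
  have h1 : m (-a) (m a w) = -a := by rw [h, hm.mul_one]
  rwa [← hm.assoc, hm.inv_mul, hm.one_mul] at h1

lemma IsCHGroup.neg_mul_neg (a b : E) : m (-b) (-a) = -(m a b) := by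
  apply hm.inv_unique
  rw [hm.assoc a b, ← hm.assoc b (-b) (-a), hm.mul_inv', hm.one_mul, hm.mul_inv']

lemma IsCHGroup.mprod_append (l₁ l₂ : List E) :
    mprod m (l₁ ++ l₂) = m (mprod m l₁) (mprod m l₂) := by
  induction l₁ with
  | nil => simp [hm.one_mul]
  | cons a t ih => simp [ih, hm.assoc]

lemma IsCHGroup.mprod_reverse_neg (l : List E) :
    mprod m (l.reverse.map fun z => -z) = -(mprod m l) := by
  induction l with
  | nil => simp
  | cons a t ih =>
    rw [List.reverse_cons, List.map_append, hm.mprod_append, ih]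
    simp only [List.map_cons, List.map_nil, mprod_cons, mprod_nil, hm.mul_one]
    exact hm.neg_mul_neg _ _

lemma IsCHGroup.shift (x : E) (f : E → E) (t : List E) :
    m x (mprod m (t.map fun b => m (f b) x)) = mprod m ((t.map fun b => m x (f b)) ++ [x]) := by
  induction t with
  | nil => simp [hm.mul_one]
  | cons a t ih =>
    simp only [List.map_cons, mprod_cons, List.cons_append]
    rw [← ih, hm.assoc (f a) x, ← hm.assoc x (f a)]

end AuxMprod

/-- Lemma 2 of the paper.
`𝒩 = 𝒩_1 ⊕ … ⊕ 𝒩_d` is a gradation of the nilpotent Lie algebra `(E, br)` of class `d`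
with `𝒩_1` generating, `N` the corresponding group (Campbell–Hausdorff multiplication `m`),
and `ρ` a left-invariant metric on `N` compatible with the topology for which the
automorphism `δ₋₁` (acting as `(-1)^k` on `𝒩_k`) is an isometry.
If `x ∈ 𝒩_{d-1}`, `ε > 0`, `n ≥ 1` and `B(x,ε)^n ∩ 𝒩^d ≠ ∅`, then `e ∈ B(x,2ε)^{2n}`. -/
theorem statement3
    {E : Type*} [NormedAddCommGroup E] [InnerProductSpace ℝ E] [FiniteDimensional ℝ E]
    (br : E →ₗ[ℝ] E →ₗ[ℝ] E) (hbr : IsLieBracket br)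
    (d : ℕ) (hd : 1 < d)
    (hclass : lcsN br d = ⊥ ∧ lcsN br (d - 1) ≠ ⊥)
    (Nsub : ℕ → Submodule ℝ E)
    (hcompl : ∀ k, 1 ≤ k → k ≤ d →
      Nsub k ⊔ lcsN br k = lcsN br (k - 1) ∧ Nsub k ⊓ lcsN br k = ⊥)
    (hNzero : ∀ k, k = 0 ∨ d < k → Nsub k = ⊥)
    (hgrad : ∀ k l, ∀ x ∈ Nsub k, ∀ y ∈ Nsub l, br x y ∈ Nsub (k + l))
    (m : E → E → E) (hm : IsCHGroup br m)
    (δneg : E →ₗ[ℝ] E) (hδneg : ∀ k : ℕ, ∀ x ∈ Nsub k, δneg x = ((-1 : ℝ) ^ k) • x)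
    (hδauto : ∀ x y, δneg (m x y) = m (δneg x) (δneg y))
    (ρ : E → E → ℝ) (hρ : IsLeftInvMetric m ρ)
    (hiso : ∀ x y, ρ (δneg x) (δneg y) = ρ x y)
    (x : E) (hx : x ∈ Nsub (d - 1)) (ε : ℝ) (hε : 0 < ε)
    (n : ℕ) (hn : 0 < n)
    (hmeet : (setPow m (mball ρ x ε) n ∩ (lcsN br (d - 1) : Set E)).Nonempty) :
    (0 : E) ∈ setPow m (mball ρ x (2 * ε)) (2 * n) := by
  obtain ⟨y, hy_pow, hy_mem⟩ := hmeet
  have hd1 : 1 ≤ d := le_of_lt hd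
  have hNd : Nsub d = lcsN br (d - 1) := by
    have h := (hcompl d hd1 le_rfl).1
    rwa [hclass.1, sup_bot_eq] at h
  have hyN : y ∈ Nsub d := by rw [hNd]; exact hy_mem
  obtain ⟨l, hlen, hmemb, hprod⟩ := (mem_setPow_iff m _ n y).mp hy_pow
  have hmemb' : ∀ b ∈ l, ρ x b < ε := hmemb
  have hδy : δneg y = ((-1 : ℝ) ^ d) • y := hδneg d y hyN
  have hδx : δneg x = ((-1 : ℝ) ^ (d - 1)) • x := hδneg (d - 1) x hx
  have hεlt : ε < 2 * ε := by linarith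
  have hρ0δ : ∀ w : E, ρ 0 (δneg w) = ρ 0 w := fun w => by
    have h := hiso 0 w; rwa [map_zero] at h
  have hρg : ∀ g k : E, ρ g (m g k) = ρ 0 k := fun g k => by
    have h := hρ.leftInvariant g 0 k; rwa [hm.mul_one] at h
  rcases Nat.even_or_odd d with hdeven | hdodd
  · -- d even
    have hδyy : δneg y = y := by rw [hδy, hdeven.neg_one_pow, one_smul]
    have hδnx : δneg (-x) = x := by
      have hodd : Odd (d - 1) := Nat.Even.sub_odd hd1 hdeven odd_one
      rw [map_neg, hδx, hodd.neg_one_pow, neg_one_smul, neg_neg]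
    set k : E → E := fun b => δneg (m (-b) x) with hk
    have hρk : ∀ b : E, ρ 0 (k b) = ρ x b := fun b => by
      have h2 := hρ.leftInvariant (-b) b x
      rw [hm.inv_mul] at h2
      calc ρ 0 (k b) = ρ 0 (m (-b) x) := hρ0δ _
        _ = ρ b x := h2
        _ = ρ x b := hρ.symm _ _
    have hneg_b : ∀ b : E, (-b) = m (m (-b) x) (-x) := fun b => by
      rw [hm.assoc, hm.mul_inv', hm.mul_one]
    have hy1 : -y = mprod m (l.reverse.map fun b => m (k b) x) := by
      have e1 : mprod m (l.reverse.map fun z : E => -z) = -y := by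
        rw [hm.mprod_reverse_neg, hprod]
      have e2 : (l.reverse.map fun z : E => -z)
          = l.reverse.map fun b => m (m (-b) x) (-x) :=
        List.map_congr_left fun b _ => hneg_b b
      have e3 : δneg (mprod m (l.reverse.map fun b => m (m (-b) x) (-x)))
          = mprod m (l.reverse.map fun b => m (k b) x) := by
        rw [mprod_map m δneg (map_zero δneg) hδauto, List.map_map]
        congr 1
        apply List.map_congr_left
        intro b _
        show δneg (m (m (-b) x) (-x)) = m (k b) x
        rw [hδauto, hδnx]
      calc -y = δneg (-y) := by rw [map_neg, hδyy]
        _ = δneg (mprod m (l.reverse.map fun z : E => -z)) := by rw [e1]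
        _ = δneg (mprod m (l.reverse.map fun b => m (m (-b) x) (-x))) := by rw [e2]
        _ = mprod m (l.reverse.map fun b => m (k b) x) := e3
    have hlnil : l.reverse ≠ [] := by
      intro h
      rw [List.reverse_eq_nil_iff] at h
      subst h
      simp at hlen
      omega
    obtain ⟨b₀, t, hrev⟩ := List.exists_cons_of_ne_nil hlnil
    have hl_eq : l = t.reverse ++ [b₀] := by
      rw [← List.reverse_reverse l, hrev]
      simp
    have hb₀l : b₀ ∈ l := by
      rw [← List.mem_reverse, hrev]; exact List.mem_cons_self
    have htl : ∀ b ∈ t, b ∈ l := fun b hb => by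
      rw [← List.mem_reverse, hrev]; exact List.mem_cons_of_mem _ hb
    have htlen : t.length = n - 1 := by
      have h := congrArg List.length hrev
      simp [hlen] at h
      omega
    set F : List E := t.reverse ++ (m b₀ (k b₀) :: ((t.map fun b => m x (k b)) ++ [x])) with hF
    have hFlen : F.length = 2 * n := by
      simp [hF, htlen]
      omega
    have hFprod : mprod m F = 0 := by
      have h0 : m y (-y) = 0 := hm.mul_inv' y
      rw [hy1, hrev, List.map_cons, mprod_cons] at h0
      have hy2 : y = m (mprod m t.reverse) b₀ := by
        rw [← hprod, hl_eq, hm.mprod_append, mprod_cons, mprod_nil, hm.mul_one]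
      rw [hy2] at h0
      rw [hF, hm.mprod_append, mprod_cons, ← hm.shift x k t]
      rw [hm.assoc] at h0
      rw [hm.assoc (k b₀) x] at h0
      rw [← hm.assoc b₀ (k b₀)] at h0
      exact h0
    have hFmem : ∀ c ∈ F, c ∈ mball ρ x (2 * ε) := by
      intro c hc
      rw [hF] at hc
      rcases List.mem_append.mp hc with hc | hc
      · have hcl : c ∈ l := htl c (List.mem_reverse.mp hc)
        exact lt_trans (hmemb' c hcl) hεlt
      · rcases List.mem_cons.mp hc with rfl | hc
        · show ρ x (m b₀ (k b₀)) < 2 * ε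
          calc ρ x (m b₀ (k b₀)) ≤ ρ x b₀ + ρ b₀ (m b₀ (k b₀)) := hρ.triangle _ _ _
            _ = ρ x b₀ + ρ 0 (k b₀) := by rw [hρg]
            _ = ρ x b₀ + ρ x b₀ := by rw [hρk]
            _ < 2 * ε := by have := hmemb' b₀ hb₀l; linarith
        · rcases List.mem_append.mp hc with hc | hc
          · obtain ⟨b, hb, rfl⟩ := List.mem_map.mp hc
            show ρ x (m x (k b)) < 2 * ε
            rw [hρg, hρk]
            exact lt_trans (hmemb' b (htl b hb)) hεlt
          · have hcx : c = x := by simpa using hc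
            show ρ x c < 2 * ε
            rw [hcx, (hρ.eq_iff x x).mpr rfl]
            positivity
    exact (mem_setPow_iff m _ _ 0).mpr ⟨F, hFlen, hFmem, hFprod⟩
  · -- d odd
    have hδyy : δneg y = -y := by rw [hδy, hdodd.neg_one_pow, neg_one_smul]
    have hδxx : δneg x = x := by
      have heven : Even (d - 1) := Nat.Odd.sub_odd hdodd odd_one
      rw [hδx, heven.neg_one_pow, one_smul]
    have h0 : mprod m (l ++ l.map δneg) = 0 := by
      rw [hm.mprod_append, ← mprod_map m δneg (map_zero δneg) hδauto, hprod, hδyy]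
      exact hm.mul_inv' y
    have hmem2 : ∀ c ∈ l ++ l.map δneg, c ∈ mball ρ x (2 * ε) := by
      intro c hc
      rcases List.mem_append.mp hc with hc | hc
      · exact lt_trans (hmemb' c hc) hεlt
      · obtain ⟨b, hb, rfl⟩ := List.mem_map.mp hc
        show ρ x (δneg b) < 2 * ε
        have h := hiso x b
        rw [hδxx] at h
        rw [h]
        exact lt_trans (hmemb' b hb) hεlt
    have hlen2 : (l ++ l.map δneg).length = 2 * n := by
      simp [hlen]
      omega
    exact (mem_setPow_iff m _ _ 0).mpr ⟨_, hlen2, hmem2, h0⟩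
end
end

section
/- Let C be a generating closed convex cone in a finite-dimensional euclidean space 𝒩, let x ∈ C with x ≠ 0, let L be a linear subspace of 𝒩, and suppose cont(C, L, x) > a for some a ≥ 1. Let v ∈ 𝒩 be such that x + v ∈ Int(C). Then there exist α > 0 and a function φ defined on (0, α) such that φ(ε) = o(ε^a) as ε → 0 and x + φ(ε)·v + ε·B_L ⊂ Int(C) for all ε ∈ (0, α), where B_L = {y ∈ L : |y| ≤ 1}. -/
open Set Filter Topology Asymptotics

set_option maxHeartbeats 1000000

noncomputable section

variable {E : Type*} [NormedAddCommGroup E] [NormedSpace ℝ E]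

/-- The degree of contact of the cone `C` with the linear subspace `L` at the point
`x ∈ C` is greater than `a`:  `dist(C, x+y) = o(|y|^a)` as `y → 0` in `L`; if `x ∈ L`
one replaces `L` by a subspace `L'` of `L` complementary to `ℝx` in `L` (the definition
does not depend on the choice of `L'`). -/
def DegContGt (C : Set E) (L : Submodule ℝ E) (x : E) (a : ℝ) : Prop :=
  (x ∉ L ∧
    (fun y => Metric.infDist (x + y) C) =o[𝓝[(L : Set E)] 0] fun y => ‖y‖ ^ a) ∨
  (x ∈ L ∧ ∃ L' : Submodule ℝ E, L' ≤ L ∧ L' ⊔ Submodule.span ℝ {x} = L ∧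
    L' ⊓ Submodule.span ℝ {x} = ⊥ ∧
    (fun y => Metric.infDist (x + y) C) =o[𝓝[(L' : Set E)] 0] fun y => ‖y‖ ^ a)

-- helper: point strictly inside a "convex combination ball" is in the interior
lemma aux_ball {C : Set E} (hCconv : Convex ℝ C) {c w : E} (hc : c ∈ C) {δ φ : ℝ}
    (hδ : 0 < δ) (hball : Metric.ball w δ ⊆ C) (hφ : 0 < φ) (hφ1 : φ ≤ 1) {q : E}
    (hq : ‖q - ((1 - φ) • c + φ • w)‖ < φ * δ) : q ∈ interior C := by
  set p₀ : E := (1 - φ) • c + φ • w with hp₀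
  have hsub : Metric.ball p₀ (φ * δ) ⊆ C := by
    intro z hz
    have hz' : ‖z - p₀‖ < φ * δ := by
      rw [Metric.mem_ball, dist_eq_norm] at hz; exact hz
    have hzw : w + φ⁻¹ • (z - p₀) ∈ Metric.ball w δ := by
      rw [Metric.mem_ball, dist_eq_norm]
      have heq : ‖w + φ⁻¹ • (z - p₀) - w‖ = φ⁻¹ * ‖z - p₀‖ := by
        rw [add_sub_cancel_left, norm_smul, norm_inv, Real.norm_of_nonneg hφ.le]
      rw [heq, inv_mul_lt_iff₀ hφ]
      linarith [hz']
    have hmem : (1 - φ) • c + φ • (w + φ⁻¹ • (z - p₀)) ∈ C :=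
      hCconv hc (hball hzw) (by linarith) hφ.le (by ring)
    have : (1 - φ) • c + φ • (w + φ⁻¹ • (z - p₀)) = z := by
      rw [smul_add, smul_smul, mul_inv_cancel₀ hφ.ne', one_smul, hp₀]
      abel
    rwa [this] at hmem
  have hqball : q ∈ Metric.ball p₀ (φ * δ) := by
    rw [Metric.mem_ball, dist_eq_norm]; exact hq
  exact mem_interior.mpr ⟨Metric.ball p₀ (φ * δ), hsub, Metric.isOpen_ball, hqball⟩

-- key lemma: conclusion, assuming contact condition along L itself
lemma key {E : Type*} [NormedAddCommGroup E] [NormedSpace ℝ E] [FiniteDimensional ℝ E]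
    (C : Set E) (hCcl : IsClosed C) (hCconv : Convex ℝ C)
    (x : E) (hxC : x ∈ C)
    (L : Submodule ℝ E) (a : ℝ) (ha : 1 ≤ a)
    (hL : (fun y => Metric.infDist (x + y) C) =o[𝓝[(L : Set E)] 0] fun y => ‖y‖ ^ a)
    (v : E) (hv : x + v ∈ interior C) :
    ∃ α : ℝ, 0 < α ∧ ∃ φ : ℝ → ℝ,
      (φ =o[𝓝[Set.Ioi (0 : ℝ)] 0] fun ε => ε ^ a) ∧
      ∀ ε : ℝ, 0 < ε → ε < α → ∀ y ∈ L, ‖y‖ ≤ 1 →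
        x + φ ε • v + ε • y ∈ interior C := by
  have ha0 : (0:ℝ) ≤ a := le_trans zero_le_one ha
  obtain ⟨δ, hδ, hball⟩ : ∃ δ > 0, Metric.ball (x + v) δ ⊆ C := by
    have := mem_interior_iff_mem_nhds.mp hv
    exact Metric.mem_nhds_iff.mp this
  -- a function g dominating infDist (x + ε y) C uniformly over the unit ball of L,
  -- with g = o(ε^a)
  obtain ⟨g, hgge, hg0, hgo⟩ :
      ∃ g : ℝ → ℝ, (∀ ε, ∀ y ∈ L, ‖y‖ ≤ 1 → Metric.infDist (x + ε • y) C ≤ g ε) ∧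
        (∀ ε, 0 ≤ g ε) ∧ g =o[𝓝[Set.Ioi (0 : ℝ)] 0] fun ε => ε ^ a := by
    set S : ℝ → Set ℝ := fun ε =>
      (fun y => Metric.infDist (x + ε • y) C) '' ((L : Set E) ∩ Metric.closedBall 0 1) with hS
    have hSne : ∀ ε, (S ε).Nonempty := fun ε =>
      ⟨Metric.infDist (x + ε • (0:E)) C, ⟨0, ⟨L.zero_mem, by simp⟩, rfl⟩⟩
    have hSbdd : ∀ ε, BddAbove (S ε) := by
      intro ε
      refine ⟨|ε|, ?_⟩
      rintro _ ⟨y, ⟨_, hy1⟩, rfl⟩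
      calc Metric.infDist (x + ε • y) C ≤ dist (x + ε • y) x := Metric.infDist_le_dist_of_mem hxC
        _ = |ε| * ‖y‖ := by rw [dist_eq_norm]; simp [norm_smul]
        _ ≤ |ε| * 1 := by
            apply mul_le_mul_of_nonneg_left _ (abs_nonneg ε)
            simpa using Metric.mem_closedBall.mp hy1
        _ = |ε| := mul_one _
    refine ⟨fun ε => sSup (S ε), ?_, ?_, ?_⟩
    · intro ε y hyL hy1
      exact le_csSup (hSbdd ε) ⟨y, ⟨hyL, by simpa using hy1⟩, rfl⟩
    · intro ε
      have h0 : Metric.infDist (x + ε • (0:E)) C ≤ sSup (S ε) :=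
        le_csSup (hSbdd ε) ⟨0, ⟨L.zero_mem, by simp⟩, rfl⟩
      exact le_trans Metric.infDist_nonneg h0
    · rw [isLittleO_iff]
      intro c hc
      have := (isLittleO_iff.mp hL) hc
      obtain ⟨r, hr, hrsub⟩ := Metric.mem_nhdsWithin_iff.mp this
      filter_upwards [Ioo_mem_nhdsGT_of_mem (by constructor <;> simp [hr] : (0:ℝ) ∈ Ico 0 r)]
        with ε hε
      obtain ⟨hε0, hεr⟩ := hε
      have hεa : (0:ℝ) ≤ ε ^ a := Real.rpow_nonneg hε0.le a
      have hsup0 : (0:ℝ) ≤ sSup (S ε) :=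
        le_trans Metric.infDist_nonneg
          (le_csSup (hSbdd ε) ⟨0, ⟨L.zero_mem, by simp⟩, rfl⟩)
      rw [Real.norm_of_nonneg hsup0, Real.norm_of_nonneg hεa]
      apply csSup_le (hSne ε)
      rintro _ ⟨y, ⟨hyL, hy1⟩, rfl⟩
      have hy1' : ‖y‖ ≤ 1 := by simpa using hy1
      have hmem : ε • y ∈ Metric.ball (0:E) r ∩ (L : Set E) := by
        constructor
        · rw [Metric.mem_ball, dist_zero_right, norm_smul, Real.norm_of_nonneg hε0.le]
          calc ε * ‖y‖ ≤ ε * 1 := mul_le_mul_of_nonneg_left hy1' hε0.le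
            _ < r := by linarith
        · exact L.smul_mem ε hyL
      have hb := hrsub hmem
      simp only [mem_setOf_eq] at hb
      have h2 : ‖ε • y‖ ^ a ≤ ε ^ a := by
        apply Real.rpow_le_rpow (norm_nonneg _) _ ha0
        rw [norm_smul, Real.norm_of_nonneg hε0.le]
        calc ε * ‖y‖ ≤ ε * 1 := mul_le_mul_of_nonneg_left hy1' hε0.le
          _ = ε := mul_one _
      calc Metric.infDist (x + ε • y) C
          = ‖Metric.infDist (x + ε • y) C‖ :=
            (Real.norm_of_nonneg Metric.infDist_nonneg).symm
        _ ≤ c * ‖‖ε • y‖ ^ a‖ := hb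
        _ = c * (‖ε • y‖ ^ a) := by
            rw [Real.norm_of_nonneg (Real.rpow_nonneg (norm_nonneg _) a)]
        _ ≤ c * (ε ^ a) := mul_le_mul_of_nonneg_left h2 hc.le
  -- the function φ
  have hφo : (fun ε => 2 / δ * g ε + ε * ε ^ a) =o[𝓝[Set.Ioi (0 : ℝ)] 0] fun ε => ε ^ a := by
    apply IsLittleO.add
    · exact hgo.const_mul_left (2 / δ)
    · rw [isLittleO_iff]
      intro c hc
      filter_upwards [Ioo_mem_nhdsGT_of_mem
        (by constructor <;> simp [hc] : (0:ℝ) ∈ Ico 0 c)] with ε hε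
      obtain ⟨hε0, hεc⟩ := hε
      have hεa : (0:ℝ) < ε ^ a := Real.rpow_pos_of_pos hε0 a
      rw [Real.norm_of_nonneg (by positivity), Real.norm_of_nonneg hεa.le]
      nlinarith
  have hev : ∀ᶠ ε in 𝓝[Set.Ioi (0:ℝ)] 0, 2 / δ * g ε + ε * ε ^ a ≤ 1/2 ∧ ε < δ / 2 := by
    have h1 : ∀ᶠ ε in 𝓝[Set.Ioi (0:ℝ)] 0,
        ‖2 / δ * g ε + ε * ε ^ a‖ ≤ 1/2 * ‖(fun ε => ε ^ a) ε‖ :=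
      (isLittleO_iff.mp hφo) (by norm_num)
    have h2 : ∀ᶠ ε in 𝓝[Set.Ioi (0:ℝ)] 0, ε ∈ Ioo (0:ℝ) (min (δ/2) 1) :=
      Ioo_mem_nhdsGT_of_mem (by constructor <;> simp [hδ])
    filter_upwards [h1, h2] with ε hφε hεI
    obtain ⟨hε0, hεm⟩ := hεI
    have hεδ : ε < δ / 2 := lt_of_lt_of_le hεm (min_le_left _ _)
    have hε1 : ε < 1 := lt_of_lt_of_le hεm (min_le_right _ _)
    refine ⟨?_, hεδ⟩
    have hεa1 : ε ^ a ≤ 1 := Real.rpow_le_one hε0.le hε1.le ha0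
    have h4 : 2 / δ * g ε + ε * ε ^ a ≤ ‖2 / δ * g ε + ε * ε ^ a‖ := by
      rw [Real.norm_eq_abs]; exact le_abs_self _
    have h3 : ‖(fun ε => ε ^ a) ε‖ = ε ^ a :=
      Real.norm_of_nonneg (Real.rpow_nonneg hε0.le a)
    rw [h3] at hφε
    linarith
  obtain ⟨α, hα, hαsub⟩ := mem_nhdsGT_iff_exists_Ioo_subset.mp hev
  refine ⟨α, hα, fun ε => 2 / δ * g ε + ε * ε ^ a, hφo, ?_⟩
  intro ε hε0 hεα y hyL hy1
  obtain ⟨hφhalf, hεδ2⟩ := hαsub ⟨hε0, hεα⟩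
  show x + (2 / δ * g ε + ε * ε ^ a) • v + ε • y ∈ interior C
  set φ : ℝ := 2 / δ * g ε + ε * ε ^ a with hexp
  have hεa : (0:ℝ) < ε ^ a := Real.rpow_pos_of_pos hε0 a
  have hgε : 0 ≤ g ε := hg0 ε
  have hφpos : 0 < φ := by rw [hexp]; positivity
  have hφ1 : φ ≤ 1 := by rw [hexp]; linarith
  -- nearest point
  obtain ⟨c, hcC, hcd⟩ := hCcl.exists_infDist_eq_dist ⟨x, hxC⟩ (x + ε • y)
  have hdist : ‖x + ε • y - c‖ ≤ g ε := by
    rw [← dist_eq_norm, ← hcd]; exact hgge ε y hyL hy1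
  -- apply aux_ball
  apply aux_ball hCconv hcC hδ hball hφpos hφ1
  have hqeq : x + φ • v + ε • y - ((1 - φ) • c + φ • (x + v))
      = (1 - φ) • (x + ε • y - c) + (φ * ε) • y := by
    simp only [smul_add, smul_sub, sub_smul, one_smul, mul_smul]
    abel
  rw [hqeq]
  have hb1 : ‖(1 - φ) • (x + ε • y - c)‖ ≤ g ε := by
    rw [norm_smul, Real.norm_of_nonneg (by linarith : (0:ℝ) ≤ 1 - φ)]
    calc (1 - φ) * ‖x + ε • y - c‖ ≤ 1 * ‖x + ε • y - c‖ :=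
          mul_le_mul_of_nonneg_right (by linarith) (norm_nonneg _)
      _ = ‖x + ε • y - c‖ := one_mul _
      _ ≤ g ε := hdist
  have hb2 : ‖(φ * ε) • y‖ ≤ φ * ε := by
    rw [norm_smul, Real.norm_of_nonneg (by positivity)]
    calc φ * ε * ‖y‖ ≤ φ * ε * 1 := mul_le_mul_of_nonneg_left hy1 (by positivity)
      _ = φ * ε := mul_one _
  calc ‖(1 - φ) • (x + ε • y - c) + (φ * ε) • y‖
      ≤ ‖(1 - φ) • (x + ε • y - c)‖ + ‖(φ * ε) • y‖ := norm_add_le _ _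
    _ ≤ g ε + φ * ε := add_le_add hb1 hb2
    _ < φ * δ := by
        rw [hexp]
        have h2ε : 2 / δ * ε ≤ 1 := by
          rw [div_mul_eq_mul_div, div_le_one hδ]; linarith
        have h1 : 2 / δ * g ε * ε ≤ g ε := by
          calc 2 / δ * g ε * ε = g ε * (2 / δ * ε) := by ring
            _ ≤ g ε * 1 := mul_le_mul_of_nonneg_left h2ε hgε
            _ = g ε := mul_one _
        have h2 : ε * ε ^ a * ε < ε * ε ^ a * δ :=
          mul_lt_mul_of_pos_left (by linarith : ε < δ) (by positivity)
        have h3 : 2 / δ * g ε * δ = 2 * g ε := by field_simp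
        nlinarith

/-- Lemma 5 of the paper.
Let `C` be a generating closed convex cone in a finite-dimensional euclidean space `E`,
`x ∈ C`, `x ≠ 0`, `L` a linear subspace with `cont(C, L, x) > a` for some `a ≥ 1`, and
`v` with `x + v ∈ Int(C)`.  Then there are `α > 0` and a function `φ` on `(0, α)` with
`φ(ε) = o(ε^a)` as `ε → 0` and `x + φ(ε) v + ε B_L ⊆ Int(C)` for all `ε ∈ (0, α)`,
where `B_L` is the closed unit ball of `L`. -/
theorem statement9
    {E : Type*} [NormedAddCommGroup E] [InnerProductSpace ℝ E] [FiniteDimensional ℝ E]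
    (C : Set E) (hCcl : IsClosed C) (hCconv : Convex ℝ C)
    (hCcone : ∀ c ∈ C, ∀ r : ℝ, 0 ≤ r → r • c ∈ C)
    (hCgen : ∀ z : E, ∃ c₁ ∈ C, ∃ c₂ ∈ C, z = c₁ - c₂)
    (x : E) (hxC : x ∈ C) (hx0 : x ≠ 0)
    (L : Submodule ℝ E) (a : ℝ) (ha : 1 ≤ a) (hcont : DegContGt C L x a)
    (v : E) (hv : x + v ∈ interior C) :
    ∃ α : ℝ, 0 < α ∧ ∃ φ : ℝ → ℝ,
      (φ =o[𝓝[Set.Ioi (0 : ℝ)] 0] fun ε => ε ^ a) ∧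
      ∀ ε : ℝ, 0 < ε → ε < α → ∀ y ∈ L, ‖y‖ ≤ 1 →
        x + φ ε • v + ε • y ∈ interior C := by
  have ha0 : (0:ℝ) ≤ a := le_trans zero_le_one ha
  -- reduce to contact along L itself
  have hL : (fun y => Metric.infDist (x + y) C) =o[𝓝[(L : Set E)] 0] fun y => ‖y‖ ^ a := by
    rcases hcont with ⟨_, hL⟩ | ⟨hxL, L', hle, hsup, hinf, h'⟩
    · exact hL
    · -- x ∈ L : transfer the little-o estimate from L' to L
      have hxnotL' : x ∉ L' := by
        intro hxL'
        have : x ∈ L' ⊓ Submodule.span ℝ {x} :=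
          ⟨hxL', Submodule.mem_span_singleton_self x⟩
        rw [hinf] at this
        exact hx0 (Submodule.mem_bot ℝ |>.mp this)
      have hL'closed : IsClosed (L' : Set E) := L'.closed_of_finiteDimensional
      obtain ⟨f, u, hfu, hufx⟩ :=
        geometric_hahn_banach_closed_point L'.convex hL'closed hxnotL'
      have hu0 : 0 < u := by simpa using hfu 0 L'.zero_mem
      have hfL' : ∀ w ∈ L', f w = 0 := by
        intro w hw
        by_contra hne
        have h1 : f (((|u| + 1) / f w) • w) < u := hfu _ (L'.smul_mem _ hw)
        rw [map_smul, smul_eq_mul, div_mul_cancel₀ _ hne] at h1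
        have : u ≤ |u| := le_abs_self u
        linarith
      have hfx : 0 < f x := lt_trans hu0 hufx
      set F : E →L[ℝ] ℝ := (f x)⁻¹ • f with hF
      have hFx : F x = 1 := by
        simp [hF, inv_mul_cancel₀ hfx.ne']
      have hFL' : ∀ w ∈ L', F w = 0 := by
        intro w hw; simp [hF, hfL' w hw]
      set M : ℝ := 1 + ‖F‖ + ‖F‖ * ‖x‖ with hM
      have hM1 : 1 ≤ M := by
        rw [hM]; nlinarith [norm_nonneg F, mul_nonneg (norm_nonneg F) (norm_nonneg x)]
      have hM0 : 0 < M := lt_of_lt_of_le one_pos hM1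
      -- decomposition bounds
      have hdecomp : ∀ y ∈ L, (y - F y • x ∈ L') ∧ |F y| ≤ M * ‖y‖ ∧
          ‖y - F y • x‖ ≤ M * ‖y‖ := by
        intro y hy
        have hyL : y ∈ L' ⊔ Submodule.span ℝ {x} := hsup ▸ hy
        obtain ⟨w, hw, z, hz, hwz⟩ := Submodule.mem_sup.mp hyL
        obtain ⟨t, rfl⟩ := Submodule.mem_span_singleton.mp hz
        have hFy : F y = t := by
          rw [← hwz, map_add, hFL' w hw, map_smul, smul_eq_mul, hFx, zero_add, mul_one]
        have hy' : y - F y • x = w := by rw [hFy, ← hwz]; abel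
        have hFb : |F y| ≤ ‖F‖ * ‖y‖ := by
          have := F.le_opNorm y
          rwa [Real.norm_eq_abs] at this
        refine ⟨hy' ▸ hw, ?_, ?_⟩
        · calc |F y| ≤ ‖F‖ * ‖y‖ := hFb
            _ ≤ M * ‖y‖ := by
                apply mul_le_mul_of_nonneg_right _ (norm_nonneg y)
                rw [hM]; nlinarith [mul_nonneg (norm_nonneg F) (norm_nonneg x)]
        · calc ‖y - F y • x‖ ≤ ‖y‖ + ‖F y • x‖ := norm_sub_le _ _
            _ = ‖y‖ + |F y| * ‖x‖ := by rw [norm_smul, Real.norm_eq_abs]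
            _ ≤ ‖y‖ + ‖F‖ * ‖y‖ * ‖x‖ := by
                have := mul_le_mul_of_nonneg_right hFb (norm_nonneg x)
                linarith
            _ = (1 + ‖F‖ * ‖x‖) * ‖y‖ := by ring
            _ ≤ M * ‖y‖ := by
                apply mul_le_mul_of_nonneg_right _ (norm_nonneg y)
                rw [hM]; nlinarith [norm_nonneg F]
      -- the estimate
      rw [isLittleO_iff]
      intro c hc
      have h2Ma : (0:ℝ) < (2 * M) ^ a := Real.rpow_pos_of_pos (by linarith) a
      set c' : ℝ := c / (2 * (2 * M) ^ a) with hc'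
      have hc'pos : 0 < c' := by rw [hc']; positivity
      obtain ⟨r, hr, hrsub⟩ := Metric.mem_nhdsWithin_iff.mp ((isLittleO_iff.mp h') hc'pos)
      set ρ : ℝ := min (1 / (2 * M)) (r / (2 * M)) with hρ
      have hρpos : 0 < ρ := by
        rw [hρ]; apply lt_min <;> positivity
      rw [eventually_iff, Metric.mem_nhdsWithin_iff]
      refine ⟨ρ, hρpos, ?_⟩
      rintro y ⟨hyball, hyL⟩
      simp only [mem_setOf_eq]
      have hyρ : ‖y‖ < ρ := by
        rwa [Metric.mem_ball, dist_zero_right] at hyball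
      have hy0 : 0 ≤ ‖y‖ := norm_nonneg y
      obtain ⟨hy'L', hsb, hy'b⟩ := hdecomp y hyL
      set s : ℝ := F y with hs
      set y' : E := y - F y • x with hy'
      -- |s| ≤ 1/2
      have hs2 : |s| ≤ 1 / 2 := by
        have h1 : M * ‖y‖ ≤ M * ρ := mul_le_mul_of_nonneg_left hyρ.le hM0.le
        have h2 : ρ ≤ 1 / (2 * M) := by rw [hρ]; exact min_le_left _ _
        have h3 : M * ρ ≤ M * (1 / (2 * M)) := mul_le_mul_of_nonneg_left h2 hM0.le
        have h4 : M * (1 / (2 * M)) = 1 / 2 := by field_simp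
        calc |s| ≤ M * ‖y‖ := hsb
          _ ≤ M * ρ := h1
          _ ≤ 1 / 2 := by rw [← h4]; exact h3
      have hs1 : 1 / 2 ≤ 1 + s := by
        have := abs_le.mp hs2
        linarith [this.1]
      have hs3 : 1 + s ≤ 3 / 2 := by
        have := abs_le.mp hs2
        linarith [this.2]
      have h1s : (0:ℝ) < 1 + s := by linarith
      -- z = (1+s)⁻¹ • y'
      set z : E := (1 + s)⁻¹ • y' with hz
      have hzL' : z ∈ L' := L'.smul_mem _ hy'L'
      have hzb : ‖z‖ ≤ 2 * M * ‖y‖ := by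
        rw [hz, norm_smul, Real.norm_of_nonneg (inv_nonneg.mpr h1s.le)]
        have hinv : (1 + s)⁻¹ ≤ 2 := by
          rw [inv_le_comm₀ h1s (by norm_num)]
          linarith
        calc (1 + s)⁻¹ * ‖y'‖ ≤ 2 * ‖y'‖ :=
              mul_le_mul_of_nonneg_right hinv (norm_nonneg _)
          _ ≤ 2 * (M * ‖y‖) := by linarith [hy'b]
          _ = 2 * M * ‖y‖ := by ring
      have hzr : ‖z‖ < r := by
        have h2 : ρ ≤ r / (2 * M) := by rw [hρ]; exact min_le_right _ _
        have : 2 * M * ‖y‖ < 2 * M * ρ := by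
          apply mul_lt_mul_of_pos_left hyρ (by positivity)
        have h3 : 2 * M * ρ ≤ r := by
          rw [le_div_iff₀ (by positivity : (0:ℝ) < 2 * M)] at h2
          linarith [h2]
        linarith [hzb]
      -- estimate at z
      have hest : Metric.infDist (x + z) C ≤ c' * ‖z‖ ^ a := by
        have hm : z ∈ Metric.ball (0:E) r ∩ (L' : Set E) := by
          constructor
          · rwa [Metric.mem_ball, dist_zero_right]
          · exact hzL'
        have := hrsub hm
        simp only [mem_setOf_eq] at this
        calc Metric.infDist (x + z) C = ‖Metric.infDist (x + z) C‖ :=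
              (Real.norm_of_nonneg Metric.infDist_nonneg).symm
          _ ≤ c' * ‖‖z‖ ^ a‖ := this
          _ = c' * ‖z‖ ^ a := by
              rw [Real.norm_of_nonneg (Real.rpow_nonneg (norm_nonneg _) a)]
      -- x + y = (1+s) • (x + z)
      have hxy : x + y = (1 + s) • (x + z) := by
        rw [hz, smul_add, smul_smul, mul_inv_cancel₀ h1s.ne', one_smul, hy']
        rw [add_smul, one_smul]
        abel
      -- scaling inequality
      have hscale : Metric.infDist (x + y) C ≤ (1 + s) * Metric.infDist (x + z) C := by
        obtain ⟨c₀, hc₀C, hc₀d⟩ := hCcl.exists_infDist_eq_dist ⟨x, hxC⟩ (x + z)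
        have hc₀C' : (1 + s) • c₀ ∈ C := hCcone c₀ hc₀C (1 + s) h1s.le
        calc Metric.infDist (x + y) C ≤ dist (x + y) ((1 + s) • c₀) :=
              Metric.infDist_le_dist_of_mem hc₀C'
          _ = dist ((1 + s) • (x + z)) ((1 + s) • c₀) := by rw [hxy]
          _ = ‖(1 + s)‖ * dist (x + z) c₀ := dist_smul₀ _ _ _
          _ = (1 + s) * Metric.infDist (x + z) C := by
              rw [Real.norm_of_nonneg h1s.le, hc₀d]
      -- final chain
      have hza : ‖z‖ ^ a ≤ (2 * M) ^ a * ‖y‖ ^ a := by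
        calc ‖z‖ ^ a ≤ (2 * M * ‖y‖) ^ a :=
              Real.rpow_le_rpow (norm_nonneg _) hzb ha0
          _ = (2 * M) ^ a * ‖y‖ ^ a := Real.mul_rpow (by positivity) hy0
      have hya : (0:ℝ) ≤ ‖y‖ ^ a := Real.rpow_nonneg hy0 a
      have hkey : Metric.infDist (x + y) C ≤ c * ‖y‖ ^ a := by
        have h1 : Metric.infDist (x + y) C ≤ (1 + s) * (c' * ‖z‖ ^ a) := by
          calc Metric.infDist (x + y) C ≤ (1 + s) * Metric.infDist (x + z) C := hscale
            _ ≤ (1 + s) * (c' * ‖z‖ ^ a) :=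
                mul_le_mul_of_nonneg_left hest h1s.le
        have h2 : (1 + s) * (c' * ‖z‖ ^ a) ≤ (3/2) * (c' * ((2 * M) ^ a * ‖y‖ ^ a)) := by
          have hz0 : (0:ℝ) ≤ ‖z‖ ^ a := Real.rpow_nonneg (norm_nonneg _) a
          have hb : c' * ‖z‖ ^ a ≤ c' * ((2 * M) ^ a * ‖y‖ ^ a) :=
            mul_le_mul_of_nonneg_left hza hc'pos.le
          nlinarith [mul_le_mul_of_nonneg_left hb (by linarith : (0:ℝ) ≤ 1 + s),
            mul_nonneg hc'pos.le hz0]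
        have h3 : (3/2) * (c' * ((2 * M) ^ a * ‖y‖ ^ a)) ≤ c * ‖y‖ ^ a := by
          rw [hc']
          have : 3 / 2 * (c / (2 * (2 * M) ^ a) * ((2 * M) ^ a * ‖y‖ ^ a))
              = (3 / 4) * (c * ‖y‖ ^ a) := by
            field_simp
            ring
          rw [this]
          nlinarith [mul_nonneg hc.le hya]
        linarith
      rw [Real.norm_of_nonneg Metric.infDist_nonneg, Real.norm_of_nonneg hya]
      exact hkey
  exact key C hCcl hCconv x hxC L a ha hL v hv
end
end

section
/- Let G be a topological group and let ρ and ρ' be two left-invariant inner metrics on G, both compatible with the topology of G. Then for every ε > 0 there exist constants C, c > 0 such that for all x, y ∈ G with ρ(x,y) > ε one has c < ρ'(x,y)/ρ(x,y) < C. -/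
open Set Filter Topology Pointwise

/-!
If the `ρ`-ball of radius `α` about `1` lies in the `ρ'`-ball of radius `β`, innerness of `ρ`
writes the `ρ`-ball of radius `(n + 1) α` as a product of `n + 1` balls of radius `α`, and left
invariance of `ρ'` puts such a product inside the `ρ'`-ball of radius `(n + 1) β`. Hence
`ρ' < (ρ / α + 1) β`, a bound that is linear with positive slope and is therefore comparable to
`ρ` once `ρ > ε`. Compatibility of both metrics with the topology provides the radii `α`, and
the same argument with the roles exchanged gives the lower bound.
-/

lemma dist_nonneg_of_metric {X : Type*} {ρ : X → X → ℝ}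
    (heq : ∀ x y, ρ x y = 0 ↔ x = y) (hsymm : ∀ x y, ρ x y = ρ y x)
    (htri : ∀ x y z, ρ x z ≤ ρ x y + ρ y z) (x y : X) : 0 ≤ ρ x y := by
  have := htri x y x
  rw [(heq x x).mpr rfl, hsymm y x] at this
  linarith

section LeftInvariant

variable {G : Type*} [Group G] {ρ ρ' : G → G → ℝ}

lemma dist_one_mul_lt_add (htri : ∀ x y z, ρ x z ≤ ρ x y + ρ y z)
    (hinv : ∀ g x y, ρ (g * x) (g * y) = ρ x y) {y z : G} {a b : ℝ}
    (hy : ρ 1 y < a) (hz : ρ 1 z < b) : ρ 1 (y * z) < a + b :=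
  calc ρ 1 (y * z) ≤ ρ 1 y + ρ y (y * z) := htri 1 y (y * z)
    _ = ρ 1 y + ρ 1 z := by rw [← hinv y 1 z, mul_one]
    _ < a + b := add_lt_add hy hz

lemma dist_one_eq_dist (hinv : ∀ g x y, ρ (g * x) (g * y) = ρ x y) (x y : G) :
    ρ 1 (x⁻¹ * y) = ρ x y := by
  rw [← hinv x⁻¹ x y, inv_mul_cancel]

variable (htri' : ∀ x y z, ρ' x z ≤ ρ' x y + ρ' y z)
  (hinv' : ∀ g x y, ρ' (g * x) (g * y) = ρ' x y)
  (hinner : ∀ r s : ℝ, 0 < r → 0 < s →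
    {x : G | ρ 1 x < r} * {x : G | ρ 1 x < s} = {x : G | ρ 1 x < r + s})
  {α β : ℝ} (hα : 0 < α) (hsub : ∀ x : G, ρ 1 x < α → ρ' 1 x < β)
include htri' hinv' hinner hα hsub

lemma dist_one_lt_succ_mul_of_ball_subset (n : ℕ) {x : G} (hx : ρ 1 x < (n + 1) * α) :
    ρ' 1 x < (n + 1) * β := by
  induction n generalizing x with
  | zero => simpa using hsub x (by simpa using hx)
  | succ n ih =>
    have hmem : x ∈ {x : G | ρ 1 x < (n + 1) * α} * {x : G | ρ 1 x < α} := by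
      rw [hinner _ _ (by positivity) hα]
      simpa [add_mul] using hx
    obtain ⟨y, hy, z, hz, rfl⟩ := hmem
    simpa [add_mul] using dist_one_mul_lt_add htri' hinv' (ih hy) (hsub z hz)

lemma dist_lt_div_add_one_mul_of_ball_subset (hinv : ∀ g x y, ρ (g * x) (g * y) = ρ x y)
    (hβ : 0 ≤ β) {x y : G} (hxy : 0 ≤ ρ x y) : ρ' x y < (ρ x y / α + 1) * β := by
  rw [← dist_one_eq_dist hinv] at hxy ⊢
  rw [← dist_one_eq_dist hinv']
  have hfloor : ρ 1 (x⁻¹ * y) < (⌊ρ 1 (x⁻¹ * y) / α⌋₊ + 1) * α := by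
    rw [← div_lt_iff₀ hα]
    exact Nat.lt_floor_add_one _
  calc ρ' 1 (x⁻¹ * y) < (⌊ρ 1 (x⁻¹ * y) / α⌋₊ + 1) * β :=
        dist_one_lt_succ_mul_of_ball_subset htri' hinv' hinner hα hsub _ hfloor
    _ ≤ (ρ 1 (x⁻¹ * y) / α + 1) * β := by
        gcongr
        exact Nat.floor_le (div_nonneg hxy hα.le)

end LeftInvariant

lemma exists_ball_subset_ball_of_compat {X : Type*} [TopologicalSpace X] {ρ ρ' : X → X → ℝ}
    (hcompat : ∀ x : X, (𝓝 x).HasBasis (fun ε : ℝ => 0 < ε) fun ε => {y | ρ x y < ε})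
    (hcompat' : ∀ x : X, (𝓝 x).HasBasis (fun ε : ℝ => 0 < ε) fun ε => {y | ρ' x y < ε})
    (x : X) {β : ℝ} (hβ : 0 < β) : ∃ α, 0 < α ∧ ∀ y, ρ x y < α → ρ' x y < β :=
  (hcompat x).mem_iff.mp ((hcompat' x).mem_of_mem hβ)

theorem statement11_general
    {G : Type*} [Group G] [TopologicalSpace G]
    (ρ ρ' : G → G → ℝ)
    (htri : ∀ x y z, ρ x z ≤ ρ x y + ρ y z)
    (hinv : ∀ g x y, ρ (g * x) (g * y) = ρ x y)
    (hcompat : ∀ x : G, (𝓝 x).HasBasis (fun ε : ℝ => 0 < ε) fun ε => {y | ρ x y < ε})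
    (hinner : ∀ r s : ℝ, 0 < r → 0 < s →
      {x : G | ρ 1 x < r} * {x : G | ρ 1 x < s} = {x : G | ρ 1 x < r + s})
    (heq' : ∀ x y, ρ' x y = 0 ↔ x = y)
    (hsymm' : ∀ x y, ρ' x y = ρ' y x)
    (htri' : ∀ x y z, ρ' x z ≤ ρ' x y + ρ' y z)
    (hinv' : ∀ g x y, ρ' (g * x) (g * y) = ρ' x y)
    (hcompat' : ∀ x : G, (𝓝 x).HasBasis (fun ε : ℝ => 0 < ε) fun ε => {y | ρ' x y < ε})
    (hinner' : ∀ r s : ℝ, 0 < r → 0 < s →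
      {x : G | ρ' 1 x < r} * {x : G | ρ' 1 x < s} = {x : G | ρ' 1 x < r + s}) :
    ∀ ε : ℝ, 0 < ε → ∃ C c : ℝ, 0 < c ∧ 0 < C ∧
      ∀ x y : G, ε < ρ x y → c < ρ' x y / ρ x y ∧ ρ' x y / ρ x y < C := by
  intro ε hε
  obtain ⟨α, hα, hball⟩ := exists_ball_subset_ball_of_compat hcompat hcompat' 1 one_pos
  -- radius `ε / 2`, so that the additive error `ε / 2` is at most half of `ρ x y`
  obtain ⟨α', hα', hball'⟩ := exists_ball_subset_ball_of_compat hcompat' hcompat 1 (half_pos hε)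
  refine ⟨1 / α + 1 / ε, α' / ε, by positivity, by positivity, fun x y hxy => ?_⟩
  have hρ : 0 < ρ x y := hε.trans hxy
  have hρ' : 0 ≤ ρ' x y := dist_nonneg_of_metric heq' hsymm' htri' x y
  have hupper : ρ' x y < (ρ x y / α + 1) * 1 :=
    dist_lt_div_add_one_mul_of_ball_subset htri' hinv' hinner hα hball hinv zero_le_one hρ.le
  have hlower : ρ x y < (ρ' x y / α' + 1) * (ε / 2) :=
    dist_lt_div_add_one_mul_of_ball_subset htri hinv hinner' hα' hball' hinv' (by positivity) hρ'
  constructor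
  · rw [div_lt_div_iff₀ hε hρ]
    have hscaled : α' * ρ x y < ρ' x y * (ε / 2) + α' * (ε / 2) :=
      calc α' * ρ x y < α' * ((ρ' x y / α' + 1) * (ε / 2)) := mul_lt_mul_of_pos_left hlower hα'
        _ = ρ' x y * (ε / 2) + α' * (ε / 2) := by field_simp
    linarith [mul_lt_mul_of_pos_left hxy hα']
  · rw [div_lt_iff₀ hρ]
    calc ρ' x y < ρ x y / α + 1 := by simpa using hupper
      _ < ρ x y / α + ρ x y / ε := by gcongr; exact (one_lt_div hε).mpr hxy
      _ = (1 / α + 1 / ε) * ρ x y := by ring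

/-- (2.24) of the paper.
Let `G` be a topological group and `ρ`, `ρ'` two left-invariant inner metrics on `G`,
both compatible with the topology of `G`.  Then for every `ε > 0` there exist constants
`C, c > 0` such that `c < ρ'(x,y)/ρ(x,y) < C` whenever `ρ(x,y) > ε`. -/
theorem statement11
    {G : Type*} [Group G] [TopologicalSpace G] [IsTopologicalGroup G]
    (ρ ρ' : G → G → ℝ)
    (heq : ∀ x y, ρ x y = 0 ↔ x = y)
    (hsymm : ∀ x y, ρ x y = ρ y x)
    (htri : ∀ x y z, ρ x z ≤ ρ x y + ρ y z)
    (hinv : ∀ g x y, ρ (g * x) (g * y) = ρ x y)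
    (hcompat : ∀ x : G, (𝓝 x).HasBasis (fun ε : ℝ => 0 < ε) fun ε => {y | ρ x y < ε})
    (hinner : ∀ r s : ℝ, 0 < r → 0 < s →
      {x : G | ρ 1 x < r} * {x : G | ρ 1 x < s} = {x : G | ρ 1 x < r + s})
    (heq' : ∀ x y, ρ' x y = 0 ↔ x = y)
    (hsymm' : ∀ x y, ρ' x y = ρ' y x)
    (htri' : ∀ x y z, ρ' x z ≤ ρ' x y + ρ' y z)
    (hinv' : ∀ g x y, ρ' (g * x) (g * y) = ρ' x y)
    (hcompat' : ∀ x : G, (𝓝 x).HasBasis (fun ε : ℝ => 0 < ε) fun ε => {y | ρ' x y < ε})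
    (hinner' : ∀ r s : ℝ, 0 < r → 0 < s →
      {x : G | ρ' 1 x < r} * {x : G | ρ' 1 x < s} = {x : G | ρ' 1 x < r + s}) :
    ∀ ε : ℝ, 0 < ε → ∃ C c : ℝ, 0 < c ∧ 0 < C ∧
      ∀ x y : G, ε < ρ x y → c < ρ' x y / ρ x y ∧ ρ' x y / ρ x y < C :=
  statement11_general ρ ρ' htri hinv hcompat hinner heq' hsymm' htri' hinv' hcompat' hinner'
end

section
/- Let G be a Lie group with a left-invariant inner metric ρ compatible with the topology and with compact closed balls, let H be a closed normal subgroup of G, and let π: G → G/H be the canonical projection. Define ρ̃(πx, πy) = inf{ρ(x·h₁, y·h₂) : h₁, h₂ ∈ H}. Then ρ̃ is a well-defined left-invariant metric on G/H compatible with the quotient topology, its open balls about the identity satisfy B̃(r) = π(B(r)), and ρ̃ is inner, i.e. B̃(r)B̃(s) = B̃(r+s) for all r, s ≥ 0. -/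
/-!
Left translations are isometries and `H` is normal, so for a fixed representative `x` of `a`
one has `ρ̃(a, b) = inf {ρ(x, y) : πy = b}`. Hence the `ρ̃`-ball of radius `r` about `πx` is
`π(B(x, r))`. Since `π` is open, these images form a neighbourhood basis of `πx`; since `π` is a
homomorphism, products of balls are images of products of balls, which gives innerness. The
triangle inequality is obtained through a common representative of the middle point, and `ρ̃`
separates points because `G ⧸ H` is T1 when `H` is closed.
-/

open Set Filter Topology Pointwise

noncomputable section

/-- The metric `ρ̃` induced on the quotient `G ⧸ H` by a metric `ρ` on `G`:
`ρ̃(πx, πy) = inf {ρ(xh₁, yh₂) : h₁, h₂ ∈ H}`, equivalently the infimum of `ρ` over all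
pairs of representatives. -/
def quotDist {G : Type*} [Group G] (H : Subgroup G) [H.Normal] (ρ : G → G → ℝ)
    (a b : G ⧸ H) : ℝ :=
  sInf {c : ℝ | ∃ x y : G, (x : G ⧸ H) = a ∧ (y : G ⧸ H) = b ∧ c = ρ x y}

theorem nonneg_of_symm_of_triangle {X : Type*} {ρ : X → X → ℝ} (hzero : ∀ x, ρ x x = 0)
    (hsymm : ∀ x y, ρ x y = ρ y x) (htri : ∀ x y z, ρ x z ≤ ρ x y + ρ y z) (x y : X) :
    0 ≤ ρ x y := by
  have := htri x y x
  rw [hzero, hsymm y x] at this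
  linarith

theorem eq_zero_iff_eq_of_hasBasis_nhds {X : Type*} [TopologicalSpace X] [T1Space X]
    {d : X → X → ℝ} (hnn : ∀ a b, 0 ≤ d a b)
    (hbasis : ∀ a, (𝓝 a).HasBasis (fun ε : ℝ => 0 < ε) fun ε => {b | d a b < ε}) (a b : X) :
    d a b = 0 ↔ a = b :=
  calc d a b = 0 ↔ ∀ ε > 0, d a b < ε :=
        ⟨fun h ε hε => h ▸ hε, fun h => le_antisymm (forall_gt_iff_le.mp h) (hnn a b)⟩
    _ ↔ pure b ≤ 𝓝 a := by simp only [(hbasis a).ge_iff, mem_pure]; rfl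
    _ ↔ a = b := pure_le_nhds_iff.trans eq_comm

section QuotDist

variable {G : Type*} [Group G] {H : Subgroup G} [H.Normal] {ρ : G → G → ℝ}

theorem quotDist_mk_mk (x y : G) : quotDist H ρ x y
    = sInf {c : ℝ | ∃ h₁ ∈ H, ∃ h₂ ∈ H, c = ρ (x * h₁) (y * h₂)} := by
  unfold quotDist
  congr 1
  ext c
  constructor
  · rintro ⟨x', y', hx, hy, rfl⟩
    refine ⟨x⁻¹ * x', QuotientGroup.eq.mp hx.symm, y⁻¹ * y', QuotientGroup.eq.mp hy.symm, ?_⟩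
    simp only [mul_inv_cancel_left]
  · rintro ⟨h₁, hh₁, h₂, hh₂, rfl⟩
    exact ⟨_, _, QuotientGroup.mk_mul_of_mem x hh₁, QuotientGroup.mk_mul_of_mem y hh₂, rfl⟩

theorem quotDist_comm (hsymm : ∀ x y, ρ x y = ρ y x) (a b : G ⧸ H) :
    quotDist H ρ a b = quotDist H ρ b a := by
  unfold quotDist
  congr 1
  ext c
  exact ⟨fun ⟨x, y, hx, hy, hc⟩ => ⟨y, x, hy, hx, hc.trans (hsymm x y)⟩,
    fun ⟨x, y, hx, hy, hc⟩ => ⟨y, x, hy, hx, hc.trans (hsymm x y)⟩⟩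

theorem quotDist_mul_left (hinv : ∀ g x y, ρ (g * x) (g * y) = ρ x y) (g a b : G ⧸ H) :
    quotDist H ρ (g * a) (g * b) = quotDist H ρ a b := by
  induction g using QuotientGroup.induction_on
  induction a using QuotientGroup.induction_on
  induction b using QuotientGroup.induction_on
  rw [← QuotientGroup.mk_mul, ← QuotientGroup.mk_mul, quotDist_mk_mk, quotDist_mk_mk]
  simp only [mul_assoc, hinv]

section

variable (hnn : ∀ x y, 0 ≤ ρ x y)
include hnn

theorem quotDist_lt_iff {a b : G ⧸ H} {r : ℝ} :
    quotDist H ρ a b < r ↔ ∃ x y : G, (x : G ⧸ H) = a ∧ (y : G ⧸ H) = b ∧ ρ x y < r := by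
  obtain ⟨x, rfl⟩ := QuotientGroup.mk_surjective a
  obtain ⟨y, rfl⟩ := QuotientGroup.mk_surjective b
  unfold quotDist
  rw [csInf_lt_iff]
  · constructor
    · rintro ⟨_, ⟨x', y', hx, hy, rfl⟩, hlt⟩
      exact ⟨x', y', hx, hy, hlt⟩
    · rintro ⟨x', y', hx, hy, hlt⟩
      exact ⟨_, ⟨x', y', hx, hy, rfl⟩, hlt⟩
  · exact ⟨0, by rintro _ ⟨x', y', -, -, rfl⟩; exact hnn x' y'⟩
  · exact ⟨ρ x y, x, y, rfl, rfl, rfl⟩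

theorem quotDist_nonneg (a b : G ⧸ H) : 0 ≤ quotDist H ρ a b :=
  not_lt.1 fun h => by
    obtain ⟨x, y, -, -, hxy⟩ := (quotDist_lt_iff hnn).1 h
    linarith [hnn x y]

theorem quotDist_mk_mk_le (x y : G) : quotDist H ρ x y ≤ ρ x y :=
  le_of_forall_gt fun _ hc => (quotDist_lt_iff hnn).2 ⟨x, y, rfl, rfl, hc⟩

variable (hinv : ∀ g x y, ρ (g * x) (g * y) = ρ x y)
include hinv

theorem quotDist_mk_lt_iff {x : G} {b : G ⧸ H} {r : ℝ} :
    quotDist H ρ x b < r ↔ ∃ y : G, (y : G ⧸ H) = b ∧ ρ x y < r := by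
  rw [quotDist_lt_iff hnn]
  constructor
  · rintro ⟨x', y, hx, rfl, hlt⟩
    have hk : x * x'⁻¹ ∈ H := by
      have := Subgroup.Normal.conj_mem inferInstance _ (QuotientGroup.eq.mp hx) x
      rwa [mul_assoc, mul_inv_cancel_right] at this
    refine ⟨x * x'⁻¹ * y, ?_, ?_⟩
    · rw [QuotientGroup.mk_mul, (QuotientGroup.eq_one_iff _).2 hk, one_mul]
    · simpa only [inv_mul_cancel_right] using (hinv (x * x'⁻¹) x' y).trans_lt hlt
  · rintro ⟨y, hy, hlt⟩
    exact ⟨x, y, rfl, hy, hlt⟩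

theorem setOf_quotDist_lt (x : G) (r : ℝ) :
    {b : G ⧸ H | quotDist H ρ x b < r} = (↑) '' {y : G | ρ x y < r} := by
  ext b
  simp only [mem_ofPred_eq, quotDist_mk_lt_iff hnn hinv, mem_image, and_comm]

theorem quotDist_triangle (hsymm : ∀ x y, ρ x y = ρ y x)
    (htri : ∀ x y z, ρ x z ≤ ρ x y + ρ y z) (a b c : G ⧸ H) :
    quotDist H ρ a c ≤ quotDist H ρ a b + quotDist H ρ b c := by
  obtain ⟨y, rfl⟩ := QuotientGroup.mk_surjective b
  rw [quotDist_comm hsymm a (y : G ⧸ H)]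
  refine le_of_forall_pos_lt_add fun ε hε => ?_
  obtain ⟨x, rfl, hx⟩ := (quotDist_mk_lt_iff hnn hinv).1
    (lt_add_of_pos_right (quotDist H ρ y a) (half_pos hε))
  obtain ⟨z, rfl, hz⟩ := (quotDist_mk_lt_iff hnn hinv).1
    (lt_add_of_pos_right (quotDist H ρ y c) (half_pos hε))
  calc quotDist H ρ x z ≤ ρ x z := quotDist_mk_mk_le hnn x z
    _ ≤ ρ y x + ρ y z := hsymm y x ▸ htri x y z
    _ < _ := by linarith

theorem hasBasis_nhds_quotDist [TopologicalSpace G] [SeparatelyContinuousMul G]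
    (hcompat : ∀ x : G, (𝓝 x).HasBasis (fun ε : ℝ => 0 < ε) fun ε => {y | ρ x y < ε})
    (a : G ⧸ H) : (𝓝 a).HasBasis (fun ε : ℝ => 0 < ε) fun ε => {b | quotDist H ρ a b < ε} := by
  obtain ⟨x, rfl⟩ := QuotientGroup.mk_surjective a
  rw [QuotientGroup.nhds_eq]
  simpa only [setOf_quotDist_lt hnn hinv] using (hcompat x).map ((↑) : G → G ⧸ H)

theorem quotDist_ball_mul_ball {r s : ℝ}
    (h : {x : G | ρ 1 x < r} * {x : G | ρ 1 x < s} = {x : G | ρ 1 x < r + s}) :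
    {b : G ⧸ H | quotDist H ρ 1 b < r} * {b : G ⧸ H | quotDist H ρ 1 b < s}
      = {b : G ⧸ H | quotDist H ρ 1 b < r + s} := by
  simp only [← QuotientGroup.mk_one, setOf_quotDist_lt hnn hinv, ← h]
  exact (image_mul (QuotientGroup.mk' H)).symm

end

end QuotDist

theorem statement12_general
    {H' : Type*} [NormedAddCommGroup H'] [NormedSpace ℝ H']
    {G : Type*} [TopologicalSpace G] [ChartedSpace H' G] [Group G]
    [LieGroup (modelWithCornersSelf ℝ H') (⊤ : ℕ∞) G]
    (ρ : G → G → ℝ)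
    (heq : ∀ x y, ρ x y = 0 ↔ x = y)
    (hsymm : ∀ x y, ρ x y = ρ y x)
    (htri : ∀ x y z, ρ x z ≤ ρ x y + ρ y z)
    (hinv : ∀ g x y, ρ (g * x) (g * y) = ρ x y)
    (hcompat : ∀ x : G, (𝓝 x).HasBasis (fun ε : ℝ => 0 < ε) fun ε => {y | ρ x y < ε})
    (hinner : ∀ r s : ℝ, 0 < r → 0 < s →
      {x : G | ρ 1 x < r} * {x : G | ρ 1 x < s} = {x : G | ρ 1 x < r + s})
    (H : Subgroup G) [H.Normal] (hHcl : IsClosed (H : Set G)) :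
    (∀ x y : G, quotDist H ρ (x : G ⧸ H) (y : G ⧸ H)
        = sInf {c : ℝ | ∃ h₁ ∈ H, ∃ h₂ ∈ H, c = ρ (x * h₁) (y * h₂)})
    ∧ (∀ a b : G ⧸ H, quotDist H ρ a b = 0 ↔ a = b)
    ∧ (∀ a b : G ⧸ H, quotDist H ρ a b = quotDist H ρ b a)
    ∧ (∀ a b c : G ⧸ H, quotDist H ρ a c ≤ quotDist H ρ a b + quotDist H ρ b c)
    ∧ (∀ g a b : G ⧸ H, quotDist H ρ (g * a) (g * b) = quotDist H ρ a b)
    ∧ (∀ a : G ⧸ H,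
        (𝓝 a).HasBasis (fun ε : ℝ => 0 < ε) fun ε => {b | quotDist H ρ a b < ε})
    ∧ (∀ r : ℝ, {b : G ⧸ H | quotDist H ρ 1 b < r}
        = QuotientGroup.mk '' {y : G | ρ 1 y < r})
    ∧ (∀ r s : ℝ, 0 < r → 0 < s →
        {b : G ⧸ H | quotDist H ρ 1 b < r} * {b : G ⧸ H | quotDist H ρ 1 b < s}
          = {b : G ⧸ H | quotDist H ρ 1 b < r + s}) := by
  have : IsTopologicalGroup G :=
    topologicalGroup_of_lieGroup (modelWithCornersSelf ℝ H') (⊤ : ℕ∞)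
  have := hHcl
  have hnn := nonneg_of_symm_of_triangle (fun x => (heq x x).2 rfl) hsymm htri
  have hbasis := hasBasis_nhds_quotDist (H := H) hnn hinv hcompat
  refine ⟨quotDist_mk_mk, eq_zero_iff_eq_of_hasBasis_nhds (quotDist_nonneg hnn) hbasis,
    quotDist_comm hsymm, quotDist_triangle hnn hinv hsymm htri, quotDist_mul_left hinv, hbasis,
    fun r => ?_, fun r s hr hs => quotDist_ball_mul_ball hnn hinv (hinner r s hr hs)⟩
  rw [← QuotientGroup.mk_one, setOf_quotDist_lt hnn hinv]

/-- (2.22)–(2.23) of the paper.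
Let `G` be a Lie group with a left-invariant inner metric `ρ` compatible with the topology
and with compact closed balls, `H` a closed normal subgroup of `G` and `π : G → G ⧸ H` the
canonical projection.  Define `ρ̃(πx, πy) = inf {ρ(xh₁, yh₂) : h₁, h₂ ∈ H}`.  Then `ρ̃` is
a well-defined left-invariant metric on `G ⧸ H` compatible with the quotient topology, its
open balls about the identity satisfy `B̃(r) = π(B(r))`, and `ρ̃` is inner:
`B̃(r)B̃(s) = B̃(r+s)`. -/
theorem statement12
    {H' : Type*} [NormedAddCommGroup H'] [NormedSpace ℝ H']
    {G : Type*} [TopologicalSpace G] [ChartedSpace H' G] [Group G]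
    [LieGroup (modelWithCornersSelf ℝ H') (⊤ : ℕ∞) G]
    (ρ : G → G → ℝ)
    (heq : ∀ x y, ρ x y = 0 ↔ x = y)
    (hsymm : ∀ x y, ρ x y = ρ y x)
    (htri : ∀ x y z, ρ x z ≤ ρ x y + ρ y z)
    (hinv : ∀ g x y, ρ (g * x) (g * y) = ρ x y)
    (hcompat : ∀ x : G, (𝓝 x).HasBasis (fun ε : ℝ => 0 < ε) fun ε => {y | ρ x y < ε})
    (hinner : ∀ r s : ℝ, 0 < r → 0 < s →
      {x : G | ρ 1 x < r} * {x : G | ρ 1 x < s} = {x : G | ρ 1 x < r + s})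
    (hcpt : ∀ (x : G) (r : ℝ), IsCompact {y : G | ρ x y ≤ r})
    (H : Subgroup G) [H.Normal] (hHcl : IsClosed (H : Set G)) :
    (∀ x y : G, quotDist H ρ (x : G ⧸ H) (y : G ⧸ H)
        = sInf {c : ℝ | ∃ h₁ ∈ H, ∃ h₂ ∈ H, c = ρ (x * h₁) (y * h₂)})
    ∧ (∀ a b : G ⧸ H, quotDist H ρ a b = 0 ↔ a = b)
    ∧ (∀ a b : G ⧸ H, quotDist H ρ a b = quotDist H ρ b a)
    ∧ (∀ a b c : G ⧸ H, quotDist H ρ a c ≤ quotDist H ρ a b + quotDist H ρ b c)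
    ∧ (∀ g a b : G ⧸ H, quotDist H ρ (g * a) (g * b) = quotDist H ρ a b)
    ∧ (∀ a : G ⧸ H,
        (𝓝 a).HasBasis (fun ε : ℝ => 0 < ε) fun ε => {b | quotDist H ρ a b < ε})
    ∧ (∀ r : ℝ, {b : G ⧸ H | quotDist H ρ 1 b < r}
        = QuotientGroup.mk '' {y : G | ρ 1 y < r})
    ∧ (∀ r s : ℝ, 0 < r → 0 < s →
        {b : G ⧸ H | quotDist H ρ 1 b < r} * {b : G ⧸ H | quotDist H ρ 1 b < s}
          = {b : G ⧸ H | quotDist H ρ 1 b < r + s}) :=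
  statement12_general (H' := H') ρ heq hsymm htri hinv hcompat hinner H hHcl
end
end

section
/- Let 𝒩 be a finite-dimensional nilpotent Lie algebra of class d with lower central series 𝒩^k, choose linear subspaces 𝒩_k ⊆ 𝒩^k complementary to 𝒩^{k+1}, so 𝒩 = 𝒩_1 ⊕ … ⊕ 𝒩_d, and for t > 0 let δ_t be the linear map multiplying the 𝒩_k-component by t^k. Fix a norm |·| on 𝒩. Then: (i) for x ∈ 𝒩_k and y ∈ 𝒩_l, δ_t^{−1}[δ_t x, δ_t y] = [x,y]_{k+l} + α(t) with |α(t)| = O(1/t) as t → ∞, where [x,y]_{k+l} is the projection of [x,y] ∈ 𝒩^{k+l} to 𝒩_{k+l} along 𝒩^{k+l+1}; (ii) consequently, for all x, y ∈ 𝒩 the limit [x,y]^a = lim_{t→∞} δ_t^{−1}[δ_t x, δ_t y] exists; (iii) [·,·]^a is a Lie bracket on 𝒩 for which the decomposition 𝒩 = 𝒩_1 ⊕ … ⊕ 𝒩_d is a gradation: [𝒩_k, 𝒩_l]^a ⊆ 𝒩_{k+l}. -/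
open Set Filter Topology Asymptotics MeasureTheory Pointwise

noncomputable section

variable {E : Type*} [NormedAddCommGroup E] [NormedSpace ℝ E]

/-- (2.9)–(2.11) of the paper: the asymptotic Lie algebra.
`(E, br)` is a finite-dimensional nilpotent Lie algebra of class `d` with chosen
complements `𝒩_k ⊆ 𝒩^k` of `𝒩^{k+1}` (with projections `proj k` onto `𝒩_k`), and `δ_t`
multiplies the `𝒩_k`-component by `t^k`.  Then:
(i) for `x ∈ 𝒩_k`, `y ∈ 𝒩_l`, `δ_t⁻¹ ⁅δ_t x, δ_t y⁆ = [x,y]_{k+l} + O(1/t)` as `t → ∞`,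
where `[x,y]_{k+l} = proj (k+l) ⁅x,y⁆` is the projection of `⁅x,y⁆ ∈ 𝒩^{k+l}` to
`𝒩_{k+l}` along `𝒩^{k+l+1}`;
(ii) for all `x, y` the limit `[x,y]^a = lim_{t→∞} δ_t⁻¹ ⁅δ_t x, δ_t y⁆` exists;
(iii) `[·,·]^a` is a (bilinear) Lie bracket on `E` for which the decomposition
`𝒩 = 𝒩_1 ⊕ … ⊕ 𝒩_d` is a gradation: `[𝒩_k, 𝒩_l]^a ⊆ 𝒩_{k+l}`. -/
theorem statement13
    {E : Type*} [NormedAddCommGroup E] [NormedSpace ℝ E] [FiniteDimensional ℝ E]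
    (br : E →ₗ[ℝ] E →ₗ[ℝ] E) (hbr : IsLieBracket br)
    (d : ℕ) (hd : 0 < d)
    (hclass : lcsN br d = ⊥ ∧ lcsN br (d - 1) ≠ ⊥)
    (Nsub : ℕ → Submodule ℝ E)
    (hcompl : ∀ k, 1 ≤ k → k ≤ d →
      Nsub k ⊔ lcsN br k = lcsN br (k - 1) ∧ Nsub k ⊓ lcsN br k = ⊥)
    (hNzero : ∀ k, k = 0 ∨ d < k → Nsub k = ⊥)
    (proj : ℕ → E →ₗ[ℝ] E)
    (hprojmem : ∀ (k : ℕ) (x : E), proj k x ∈ Nsub k)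
    (hprojid : ∀ k : ℕ, ∀ x ∈ Nsub k, proj k x = x)
    (hprojzero : ∀ k l : ℕ, l ≠ k → ∀ x ∈ Nsub l, proj k x = 0)
    (hprojsum : ∀ x : E, ∑ k ∈ Finset.range (d + 1), proj k x = x)
    (δ : ℝ → E →ₗ[ℝ] E) (hδ : ∀ (t : ℝ) (k : ℕ), ∀ x ∈ Nsub k, δ t x = t ^ k • x) :
    (∀ k l : ℕ, 1 ≤ k → k ≤ d → 1 ≤ l → l ≤ d → ∀ x ∈ Nsub k, ∀ y ∈ Nsub l,
      (fun t : ℝ => δ t⁻¹ (br (δ t x) (δ t y)) - proj (k + l) (br x y))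
        =O[Filter.atTop] fun t : ℝ => 1 / t)
    ∧ (∀ x y : E, ∃ L : E,
        Filter.Tendsto (fun t : ℝ => δ t⁻¹ (br (δ t x) (δ t y))) Filter.atTop (𝓝 L))
    ∧ (∃ abr : E →ₗ[ℝ] E →ₗ[ℝ] E,
        (∀ x y : E, Filter.Tendsto (fun t : ℝ => δ t⁻¹ (br (δ t x) (δ t y)))
          Filter.atTop (𝓝 (abr x y)))
        ∧ IsLieBracket abr
        ∧ ∀ k l : ℕ, ∀ x ∈ Nsub k, ∀ y ∈ Nsub l, abr x y ∈ Nsub (k + l)) := by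
  classical
  obtain ⟨hcl, -⟩ := hclass
  -- antisymmetry of the bracket
  have hanti : ∀ u v : E, br u v = - br v u := by
    intro u v
    have h := hbr.alternating (u + v)
    simp only [map_add, LinearMap.add_apply, hbr.alternating, zero_add, add_zero] at h
    exact eq_neg_of_add_eq_zero_left (by rwa [add_comm] at h)
  have hlcs_succ : ∀ j, lcsN br (j+1) =
      Submodule.span ℝ {z | ∃ x, ∃ y ∈ lcsN br j, z = br x y} := fun j => rfl
  have hgen : ∀ j (u : E), ∀ v ∈ lcsN br j, br u v ∈ lcsN br (j+1) := by
    intro j u v hv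
    rw [hlcs_succ]
    exact Submodule.subset_span ⟨u, v, hv, rfl⟩
  -- monotonicity of the lower central series
  have hmono : ∀ j, lcsN br (j+1) ≤ lcsN br j := by
    intro j
    induction j with
    | zero => exact le_top
    | succ j ih =>
      rw [hlcs_succ]
      refine Submodule.span_le.mpr ?_
      rintro z ⟨u, v, hv, rfl⟩
      exact hgen j u v (ih hv)
  have hmono' : ∀ i j, i ≤ j → lcsN br j ≤ lcsN br i := by
    intro i j h
    induction h with
    | refl => exact le_rfl
    | step h ih => exact le_trans (hmono _) ih
  -- bracket of terms of the lower central series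
  have hbrlcs : ∀ b a, ∀ x ∈ lcsN br a, ∀ y ∈ lcsN br b, br x y ∈ lcsN br (a+b+1) := by
    intro b
    induction b with
    | zero =>
      intro a x hx y _
      rw [hanti]
      exact neg_mem (hgen a y x hx)
    | succ b ih =>
      intro a x hx y hy
      rw [hlcs_succ] at hy
      induction hy using Submodule.span_induction with
      | mem z hz =>
        obtain ⟨u, v, hv, rfl⟩ := hz
        have h1 : br v x ∈ lcsN br (a+b+1) := by
          rw [hanti]
          exact neg_mem (ih a x hx v hv)
        have h2 : br u (br v x) ∈ lcsN br (a+b+2) := hgen _ u _ h1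
        have h3 : br x u ∈ lcsN br (a+1) := by
          rw [hanti]
          exact neg_mem (hgen a u x hx)
        have h4 : br (br x u) v ∈ lcsN br ((a+1)+b+1) := ih (a+1) _ h3 v hv
        have h5 : br v (br x u) ∈ lcsN br (a+b+2) := by
          rw [hanti]
          have he : (a+1)+b+1 = a+b+2 := by omega
          rw [he] at h4
          exact neg_mem h4
        have hj := hbr.jacobi x u v
        rw [add_assoc] at hj
        have hx' : br x (br u v) = -(br u (br v x) + br v (br x u)) :=
          eq_neg_of_add_eq_zero_left hj
        have he2 : a + (b+1) + 1 = a+b+2 := by omega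
        rw [he2, hx']
        exact neg_mem (add_mem h2 h5)
      | zero => simp
      | add p q hp hq h1 h2 => rw [map_add]; exact add_mem h1 h2
      | smul r p hp h => rw [_root_.map_smul]; exact Submodule.smul_mem _ _ h
  have hlcs_bot : ∀ j, d ≤ j → ∀ w ∈ lcsN br j, w = (0:E) := by
    intro j hj w hw
    have h := hmono' d j hj hw
    rw [hcl] at h
    simpa using h
  -- vanishing of low projections on the lower central series
  have hproj_lcs : ∀ j, ∀ w ∈ lcsN br j, ∀ m, m ≤ j → proj m w = 0 := by
    have key : ∀ n j, d ≤ j + n → ∀ w ∈ lcsN br j, ∀ m, m ≤ j → proj m w = 0 := by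
      intro n
      induction n with
      | zero =>
        intro j hj w hw m _
        rw [hlcs_bot j (by omega) w hw]
        simp
      | succ n ih =>
        intro j hj w hw m hm
        by_cases hjd : d ≤ j
        · rw [hlcs_bot j hjd w hw]; simp
        · have hc := (hcompl (j+1) (by omega) (by omega)).1
          simp only [Nat.add_sub_cancel] at hc
          rw [← hc] at hw
          obtain ⟨a, ha, b, hb, rfl⟩ := Submodule.mem_sup.mp hw
          rw [map_add, hprojzero m (j+1) (by omega) a ha,
            ih (j+1) (by omega) b hb m (by omega), add_zero]
    intro j w hw m hm
    exact key d j (by omega) w hw m hm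
  -- residue lemma
  have hres : ∀ j, 1 ≤ j → ∀ w ∈ lcsN br (j-1), w - proj j w ∈ lcsN br j := by
    intro j hj w hw
    by_cases hjd : j ≤ d
    · have hc := (hcompl j hj hjd).1
      rw [← hc] at hw
      obtain ⟨a, ha, b, hb, rfl⟩ := Submodule.mem_sup.mp hw
      rw [map_add, hprojid j a ha, hproj_lcs j b hb j le_rfl, add_zero,
        add_sub_cancel_left]
      exact hb
    · have hw0 : w = 0 := hlcs_bot (j-1) (by omega) w hw
      rw [hw0]
      simp
  have hNle : ∀ k, 1 ≤ k → k ≤ d → Nsub k ≤ lcsN br (k-1) := by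
    intro k h1 h2
    rw [← (hcompl k h1 h2).1]
    exact le_sup_left
  have hproj_bot : ∀ k, k = 0 ∨ d < k → ∀ x : E, proj k x = 0 := by
    intro k hk x
    have h := hprojmem k x
    rw [hNzero k hk] at h
    simpa using h
  have hzero_of_mem : ∀ k, k = 0 ∨ d < k → ∀ x ∈ Nsub k, x = 0 := by
    intro k hk x hx
    rw [hNzero k hk] at hx
    simpa using hx
  -- expansion of the rescaled bracket for graded elements
  have hfun : ∀ (k l : ℕ) (x : E), x ∈ Nsub k → ∀ y ∈ Nsub l, ∀ t : ℝ,
      δ t⁻¹ (br (δ t x) (δ t y)) =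
        ∑ m ∈ Finset.range (d+1), ((t^k * t^l) * (t⁻¹)^m) • proj m (br x y) := by
    intro k l x hx y hy t
    rw [hδ t k x hx, hδ t l y hy]
    rw [show (br (t^k • x)) (t^l • y) = (t^k * t^l) • (br x y) by
      rw [LinearMap.map_smul₂, _root_.map_smul, smul_smul]]
    rw [_root_.map_smul]
    conv_lhs => rw [← hprojsum (br x y)]
    rw [map_sum, Finset.smul_sum]
    refine Finset.sum_congr rfl fun m _ => ?_
    rw [hδ t⁻¹ m _ (hprojmem m (br x y)), smul_smul]
  -- part (i)
  have parti : ∀ k l : ℕ, 1 ≤ k → k ≤ d → 1 ≤ l → l ≤ d → ∀ x ∈ Nsub k, ∀ y ∈ Nsub l,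
      (fun t : ℝ => δ t⁻¹ (br (δ t x) (δ t y)) - proj (k + l) (br x y))
        =O[Filter.atTop] fun t : ℝ => 1 / t := by
    intro k l hk1 hkd hl1 hld x hx y hy
    have hxl : x ∈ lcsN br (k-1) := hNle k hk1 hkd hx
    have hyl : y ∈ lcsN br (l-1) := hNle l hl1 hld hy
    have hw : br x y ∈ lcsN br (k+l-1) := by
      have h := hbrlcs (l-1) (k-1) x hxl y hyl
      have he : (k-1)+(l-1)+1 = k+l-1 := by omega
      rwa [he] at h
    rcases le_or_gt (k+l) d with hkl | hkl
    · have hproj_w : ∀ m, m < k+l → proj m (br x y) = 0 := fun m hm =>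
        hproj_lcs (k+l-1) _ hw m (by omega)
      rw [Asymptotics.isBigO_iff]
      refine ⟨∑ m ∈ Finset.range (d+1), ‖proj m (br x y)‖, ?_⟩
      filter_upwards [Filter.eventually_ge_atTop (1:ℝ)] with t ht
      have ht0 : (0:ℝ) < t := lt_of_lt_of_le one_pos ht
      have hmem : k + l ∈ Finset.range (d+1) := Finset.mem_range.mpr (by omega)
      have hsplit : δ t⁻¹ (br (δ t x) (δ t y)) - proj (k+l) (br x y) =
          ∑ m ∈ (Finset.range (d+1)).erase (k+l),
            ((t^k*t^l)*(t⁻¹)^m) • proj m (br x y) := by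
        rw [hfun k l x hx y hy t, ← Finset.add_sum_erase _ _ hmem]
        have hco : (t^k*t^l)*(t⁻¹)^(k+l) = 1 := by
          rw [← pow_add, inv_pow, mul_inv_cancel₀ (pow_ne_zero _ (ne_of_gt ht0))]
        rw [hco, one_smul, add_sub_cancel_left]
      rw [hsplit]
      have hnt : ‖1/t‖ = 1/t := by
        rw [Real.norm_eq_abs, abs_of_pos (by positivity)]
      calc ‖∑ m ∈ (Finset.range (d+1)).erase (k+l),
              ((t^k*t^l)*(t⁻¹)^m) • proj m (br x y)‖
          ≤ ∑ m ∈ (Finset.range (d+1)).erase (k+l),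
              ‖((t^k*t^l)*(t⁻¹)^m) • proj m (br x y)‖ := norm_sum_le _ _
        _ ≤ ∑ m ∈ (Finset.range (d+1)).erase (k+l), ‖proj m (br x y)‖ * ‖1/t‖ := by
            refine Finset.sum_le_sum fun m hm => ?_
            obtain ⟨hne, hmr⟩ := Finset.mem_erase.mp hm
            rcases lt_or_gt_of_ne hne with hlt | hgt
            · rw [hproj_w m hlt]
              simp
            · rw [norm_smul, Real.norm_eq_abs, abs_of_pos (by positivity), hnt,
                mul_comm (‖proj m (br x y)‖) (1/t)]
              refine mul_le_mul_of_nonneg_right ?_ (norm_nonneg _)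
              have hrw : t^k*t^l*(t⁻¹)^m = t^(k+l)/t^m := by
                rw [← pow_add, inv_pow, div_eq_mul_inv]
              rw [hrw, div_le_div_iff₀ (pow_pos ht0 m) ht0, one_mul, ← pow_succ]
              exact pow_le_pow_right₀ ht (by omega)

        _ ≤ (∑ m ∈ Finset.range (d+1), ‖proj m (br x y)‖) * ‖1/t‖ := by
            rw [← Finset.sum_mul]
            refine mul_le_mul_of_nonneg_right ?_ (norm_nonneg _)
            exact Finset.sum_le_sum_of_subset_of_nonneg (Finset.erase_subset _ _)
              (fun m _ _ => norm_nonneg _)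
    · have hw0 : br x y = 0 := hlcs_bot (k+l-1) (by omega) _ hw
      have hz : (fun t : ℝ => δ t⁻¹ (br (δ t x) (δ t y)) - proj (k+l) (br x y))
          = fun _ : ℝ => (0:E) := by
        funext t
        rw [hfun k l x hx y hy t, hw0]
        simp
      rw [hz]
      exact Asymptotics.isBigO_zero _ _
  -- the asymptotic bracket
  let abr : E →ₗ[ℝ] E →ₗ[ℝ] E :=
    ∑ k ∈ Finset.range (d+1), ∑ l ∈ Finset.range (d+1),
      ((br.compl₁₂ (proj k) (proj l)).compr₂ (proj (k+l)))
  have habr_apply : ∀ x y : E, abr x y =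
      ∑ k ∈ Finset.range (d+1), ∑ l ∈ Finset.range (d+1),
        proj (k+l) (br (proj k x) (proj l y)) := by
    intro x y
    simp [abr, LinearMap.sum_apply, LinearMap.compr₂_apply, LinearMap.compl₁₂_apply]
  -- decomposition of the rescaled bracket as a double sum
  have hsum_f : ∀ (x y : E) (t : ℝ), δ t⁻¹ (br (δ t x) (δ t y)) =
      ∑ k ∈ Finset.range (d+1), ∑ l ∈ Finset.range (d+1),
        δ t⁻¹ (br (δ t (proj k x)) (δ t (proj l y))) := by
    intro x y t
    conv_lhs => rw [← hprojsum x, ← hprojsum y]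
    simp only [map_sum, LinearMap.sum_apply, map_sum]
    rw [Finset.sum_comm]
  have hdiv : Filter.Tendsto (fun t : ℝ => 1/t) Filter.atTop (𝓝 (0:ℝ)) := by
    simpa [one_div] using tendsto_inv_atTop_zero
  -- convergence
  have htend : ∀ x y : E, Filter.Tendsto (fun t : ℝ => δ t⁻¹ (br (δ t x) (δ t y)))
      Filter.atTop (𝓝 (abr x y)) := by
    intro x y
    have hfx : (fun t : ℝ => δ t⁻¹ (br (δ t x) (δ t y))) = fun t =>
        ∑ k ∈ Finset.range (d+1), ∑ l ∈ Finset.range (d+1),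
          δ t⁻¹ (br (δ t (proj k x)) (δ t (proj l y))) := funext (hsum_f x y)
    rw [hfx, habr_apply]
    refine tendsto_finset_sum _ fun k hk => tendsto_finset_sum _ fun l hl => ?_
    rcases Nat.eq_zero_or_pos k with hk0 | hk1
    · have h0 : proj k x = 0 := by rw [hk0]; exact hproj_bot 0 (Or.inl rfl) x
      have hz : (fun t : ℝ => δ t⁻¹ (br (δ t (proj k x)) (δ t (proj l y))))
          = fun _ : ℝ => (0:E) := by
        funext t; rw [h0]; simp
      rw [hz, h0]
      simp only [map_zero, LinearMap.zero_apply]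
      exact tendsto_const_nhds
    rcases Nat.eq_zero_or_pos l with hl0 | hl1
    · have h0 : proj l y = 0 := by rw [hl0]; exact hproj_bot 0 (Or.inl rfl) y
      have hz : (fun t : ℝ => δ t⁻¹ (br (δ t (proj k x)) (δ t (proj l y))))
          = fun _ : ℝ => (0:E) := by
        funext t; rw [h0]; simp
      rw [hz, h0]
      simp only [map_zero]
      exact tendsto_const_nhds
    have hkd : k ≤ d := by have := Finset.mem_range.mp hk; omega
    have hld : l ≤ d := by have := Finset.mem_range.mp hl; omega
    have hO := parti k l hk1 hkd hl1 hld (proj k x) (hprojmem k x)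
      (proj l y) (hprojmem l y)
    exact tendsto_sub_nhds_zero_iff.mp (hO.trans_tendsto hdiv)
  -- the grading property
  have hgraded : ∀ (k l : ℕ) (x : E), x ∈ Nsub k → ∀ y ∈ Nsub l,
      abr x y = proj (k+l) (br x y) := by
    intro k l x hx y hy
    by_cases hkr : 1 ≤ k ∧ k ≤ d
    swap
    · have hx0 : x = 0 := hzero_of_mem k (by omega) x hx
      rw [hx0]
      simp
    by_cases hlr : 1 ≤ l ∧ l ≤ d
    swap
    · have hy0 : y = 0 := hzero_of_mem l (by omega) y hy
      rw [hy0]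
      simp
    rw [habr_apply]
    rw [Finset.sum_eq_single k]
    · rw [Finset.sum_eq_single l]
      · rw [hprojid k x hx, hprojid l y hy]
      · intro b _ hb
        rw [hprojzero b l (Ne.symm hb) y hy]
        simp
      · intro h
        exact absurd (Finset.mem_range.mpr (by omega)) h
    · intro b _ hb
      rw [hprojzero b k (Ne.symm hb) x hx]
      simp
    · intro h
      exact absurd (Finset.mem_range.mpr (by omega)) h
  -- key projection lemma for Jacobi
  have hkey : ∀ (k : ℕ) (x : E), x ∈ Nsub k → ∀ j, 1 ≤ j → ∀ w ∈ lcsN br (j-1),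
      proj (k+j) (br x (proj j w)) = proj (k+j) (br x w) := by
    intro k x hx j hj w hw
    by_cases hkr : 1 ≤ k ∧ k ≤ d
    · have hxl : x ∈ lcsN br (k-1) := hNle k hkr.1 hkr.2 hx
      have h1 : br x (w - proj j w) ∈ lcsN br (k+j) := by
        have h := hbrlcs j (k-1) x hxl _ (hres j hj w hw)
        have he : (k-1)+j+1 = k+j := by omega
        rwa [he] at h
      have h2 : proj (k+j) (br x (w - proj j w)) = 0 := hproj_lcs _ _ h1 _ le_rfl
      rw [map_sub, map_sub] at h2
      exact (sub_eq_zero.mp h2).symm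
    · have hx0 : x = 0 := hzero_of_mem k (by omega) x hx
      rw [hx0]
      simp
  -- Jacobi for graded elements
  have hJgraded : ∀ (k l n : ℕ) (x y z : E), x ∈ Nsub k → y ∈ Nsub l → z ∈ Nsub n →
      abr x (abr y z) + abr y (abr z x) + abr z (abr x y) = 0 := by
    intro k l n x y z hx hy hz
    by_cases hkr : 1 ≤ k ∧ k ≤ d
    swap
    · have hx0 : x = 0 := hzero_of_mem k (by omega) x hx
      rw [hx0]; simp
    by_cases hlr : 1 ≤ l ∧ l ≤ d
    swap
    · have hy0 : y = 0 := hzero_of_mem l (by omega) y hy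
      rw [hy0]; simp
    by_cases hnr : 1 ≤ n ∧ n ≤ d
    swap
    · have hz0 : z = 0 := hzero_of_mem n (by omega) z hz
      rw [hz0]; simp
    have hmem : ∀ (a b : ℕ) (u v : E), u ∈ Nsub a → 1 ≤ a → a ≤ d →
        v ∈ Nsub b → 1 ≤ b → b ≤ d → br u v ∈ lcsN br (a+b-1) := by
      intro a b u v hu ha1 had hv hb1 hbd
      have h := hbrlcs (b-1) (a-1) u (hNle a ha1 had hu) v (hNle b hb1 hbd hv)
      have he : (a-1)+(b-1)+1 = a+b-1 := by omega
      rwa [he] at h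
    have e1 : abr x (abr y z) = proj (k+(l+n)) (br x (br y z)) := by
      rw [hgraded l n y hy z hz, hgraded k (l+n) x hx _ (hprojmem _ _),
        hkey k x hx (l+n) (by omega) _ (hmem l n y z hy hlr.1 hlr.2 hz hnr.1 hnr.2)]
    have e2 : abr y (abr z x) = proj (l+(n+k)) (br y (br z x)) := by
      rw [hgraded n k z hz x hx, hgraded l (n+k) y hy _ (hprojmem _ _),
        hkey l y hy (n+k) (by omega) _ (hmem n k z x hz hnr.1 hnr.2 hx hkr.1 hkr.2)]
    have e3 : abr z (abr x y) = proj (n+(k+l)) (br z (br x y)) := by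
      rw [hgraded k l x hx y hy, hgraded n (k+l) z hz _ (hprojmem _ _),
        hkey n z hz (k+l) (by omega) _ (hmem k l x y hx hkr.1 hkr.2 hy hlr.1 hlr.2)]
    rw [e1, e2, e3, show l+(n+k) = k+(l+n) from by omega,
      show n+(k+l) = k+(l+n) from by omega, ← map_add, ← map_add,
      hbr.jacobi x y z, map_zero]
  -- Jacobi in general, by trilinearity
  have hjac : ∀ x y z : E, abr x (abr y z) + abr y (abr z x) + abr z (abr x y) = 0 := by
    intro x y z
    calc abr x (abr y z) + abr y (abr z x) + abr z (abr x y)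
        = ∑ k ∈ Finset.range (d+1), (abr (proj k x) (abr y z)
            + abr y (abr z (proj k x)) + abr z (abr (proj k x) y)) := by
          conv_lhs => rw [← hprojsum x]
          simp only [map_sum, LinearMap.sum_apply, ← Finset.sum_add_distrib]
      _ = ∑ k ∈ Finset.range (d+1), ∑ l ∈ Finset.range (d+1),
            (abr (proj k x) (abr (proj l y) z) + abr (proj l y) (abr z (proj k x))
              + abr z (abr (proj k x) (proj l y))) := by
          refine Finset.sum_congr rfl fun k _ => ?_
          conv_lhs => rw [← hprojsum y]
          simp only [map_sum, LinearMap.sum_apply, ← Finset.sum_add_distrib]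
      _ = ∑ k ∈ Finset.range (d+1), ∑ l ∈ Finset.range (d+1), ∑ n ∈ Finset.range (d+1),
            (abr (proj k x) (abr (proj l y) (proj n z))
              + abr (proj l y) (abr (proj n z) (proj k x))
              + abr (proj n z) (abr (proj k x) (proj l y))) := by
          refine Finset.sum_congr rfl fun k _ => Finset.sum_congr rfl fun l _ => ?_
          conv_lhs => rw [← hprojsum z]
          simp only [map_sum, LinearMap.sum_apply, ← Finset.sum_add_distrib]
      _ = 0 := Finset.sum_eq_zero fun k _ => Finset.sum_eq_zero fun l _ =>
          Finset.sum_eq_zero fun n _ => hJgraded k l n _ _ _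
            (hprojmem k x) (hprojmem l y) (hprojmem n z)
  -- alternating
  have halt : ∀ x : E, abr x x = 0 := by
    intro x
    have h1 := htend x x
    have h2 : (fun t : ℝ => δ t⁻¹ (br (δ t x) (δ t x))) = fun _ : ℝ => (0:E) := by
      funext t
      rw [hbr.alternating (δ t x)]
      simp
    rw [h2] at h1
    exact (tendsto_nhds_unique h1 tendsto_const_nhds)
  exact ⟨parti, fun x y => ⟨abr x y, htend x y⟩, abr, htend, ⟨halt, hjac⟩,
    fun k l x hx y hy => (hgraded k l x hx y hy) ▸ hprojmem _ _⟩
end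
end
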